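/- arXiv:1607.04021 — 7 statements merged into one kernel-verified Lean document; each statement's English description precedes it below -/
import Mathlib

section
/- If β ≥ −π², then the double-beam system admits only the trivial solution: every solution (u, v) of the double-beam system satisfies u(x) = 0 and v(x) = 0 for all x ∈ [0,1]. -/
open Real Set

noncomputable def ee (n : ℕ) : ℝ → ℝ := fun x => Real.sqrt 2 * Real.sin (n * Real.pi * x)

noncomputable def lam (n : ℕ) : ℝ := (n : ℝ) ^ 2 * Real.pi ^ 2

noncomputable def energy (u : ℝ → ℝ) : ℝ := ∫ s in (0:ℝ)..1, (deriv u s) ^ 2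

/-- `(u, v)` is a solution of the double-beam system with parameters `β ϱ k`. -/
def DBSol (β ϱ k : ℝ) (u v : ℝ → ℝ) : Prop :=
  ContDiff ℝ 4 u ∧ ContDiff ℝ 4 v ∧
  (∀ x ∈ Set.Icc (0:ℝ) 1,
    iteratedDeriv 4 u x - (β + ϱ * energy u) * iteratedDeriv 2 u x + k * (u x - v x) = 0) ∧
  (∀ x ∈ Set.Icc (0:ℝ) 1,
    iteratedDeriv 4 v x - (β + ϱ * energy v) * iteratedDeriv 2 v x - k * (u x - v x) = 0) ∧
  u 0 = 0 ∧ u 1 = 0 ∧ iteratedDeriv 2 u 0 = 0 ∧ iteratedDeriv 2 u 1 = 0 ∧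
  v 0 = 0 ∧ v 1 = 0 ∧ iteratedDeriv 2 v 0 = 0 ∧ iteratedDeriv 2 v 1 = 0

open MeasureTheory intervalIntegral Filter Topology

lemma cs_int (f g : ℝ → ℝ) (hf : Continuous f) (hg : Continuous g) :
    (∫ x in (0:ℝ)..1, f x * g x)^2 ≤ (∫ x in (0:ℝ)..1, f x^2) * (∫ x in (0:ℝ)..1, g x^2) := by
  have key : ∀ t : ℝ, 0 ≤ (∫ x in (0:ℝ)..1, f x^2) * (t * t) + (2 * ∫ x in (0:ℝ)..1, f x * g x) * t + (∫ x in (0:ℝ)..1, g x^2) := by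
    intro t
    have h0 : (0:ℝ) ≤ ∫ x in (0:ℝ)..1, (t * f x + g x)^2 :=
      intervalIntegral.integral_nonneg (by norm_num) (fun x _ => sq_nonneg _)
    have h1 : IntervalIntegrable (fun x => t * t * f x ^ 2 + 2 * t * (f x * g x)) volume 0 1 :=
      (((continuous_const.mul (hf.pow 2))).add (continuous_const.mul (hf.mul hg))).intervalIntegrable _ _
    have hexp : (∫ x in (0:ℝ)..1, (t * f x + g x)^2)
        = (∫ x in (0:ℝ)..1, f x^2) * (t * t) + (2 * ∫ x in (0:ℝ)..1, f x * g x) * t + (∫ x in (0:ℝ)..1, g x^2) := by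
      have e1 : ∀ x ∈ uIcc (0:ℝ) 1, (t * f x + g x)^2
          = (t * t * f x ^2 + 2 * t * (f x * g x)) + g x ^2 := fun x _ => by ring
      rw [intervalIntegral.integral_congr e1,
        intervalIntegral.integral_add (g := fun x => g x ^ 2) h1 ((hg.pow 2).intervalIntegrable _ _),
        intervalIntegral.integral_add (f := fun x => t * t * f x ^ 2) (g := fun x => 2 * t * (f x * g x)) ((continuous_const.mul (hf.pow 2)).intervalIntegrable _ _)
          ((continuous_const.mul (hf.mul hg)).intervalIntegrable _ _),
        intervalIntegral.integral_const_mul, intervalIntegral.integral_const_mul]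
      ring
    linarith [hexp ▸ h0]
  have := discrim_le_zero key
  unfold discrim at this
  nlinarith [this]

lemma cd_deriv {n : ℕ} {f : ℝ → ℝ} (hf : ContDiff ℝ (n+1 : ℕ) f) : ContDiff ℝ (n : ℕ) (deriv f) := by
  have := ContDiff.iterate_deriv' n 1 (f := f) (by exact_mod_cast hf)
  simpa using this

lemma hd_of_cd {f : ℝ → ℝ} (hf : ContDiff ℝ 1 f) (x : ℝ) : HasDerivAt f (deriv f x) x :=
  ((hf.differentiable one_ne_zero) x).hasDerivAt

lemma ibp1 {f : ℝ → ℝ} (hf : ContDiff ℝ 2 f) (h0 : f 0 = 0) (h1 : f 1 = 0) :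
    (∫ x in (0:ℝ)..1, iteratedDeriv 2 f x * f x) = -∫ x in (0:ℝ)..1, (deriv f x)^2 := by
  have hf2 : ContDiff ℝ ((1:ℕ)+1 : ℕ) f := by exact_mod_cast hf
  have hf1 : ContDiff ℝ (1:ℕ) (deriv f) := cd_deriv hf2
  have hf1' : ContDiff ℝ 1 f := hf.of_le (by norm_num)
  have h2 : iteratedDeriv 2 f = deriv (deriv f) := by
    rw [show 2 = 1 + 1 from rfl, iteratedDeriv_succ, iteratedDeriv_one]
  have hc2 : Continuous (iteratedDeriv 2 f) := h2 ▸ hf1.continuous_deriv le_rfl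
  have hcd : Continuous (deriv f) := hf1.continuous
  have hG : ∀ x ∈ uIcc (0:ℝ) 1, HasDerivAt (fun y => deriv f y * f y)
      (iteratedDeriv 2 f x * f x + (deriv f x)^2) x := by
    intro x _
    have := (hd_of_cd (by exact_mod_cast hf1) x).mul (hd_of_cd hf1' x)
    rw [h2]; exact this.congr_deriv (by ring)
  have hInt : IntervalIntegrable (fun x => iteratedDeriv 2 f x * f x + (deriv f x)^2) volume 0 1 :=
    ((hc2.mul hf.continuous).add (hcd.pow 2)).intervalIntegrable _ _
  have := intervalIntegral.integral_eq_sub_of_hasDerivAt hG hInt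
  rw [h0, h1, mul_zero, mul_zero, sub_zero] at this
  rw [intervalIntegral.integral_add (f := fun x => iteratedDeriv 2 f x * f x) (g := fun x => deriv f x ^ 2) ((hc2.mul hf.continuous).intervalIntegrable _ _)
    ((hcd.pow 2).intervalIntegrable _ _)] at this
  linarith

lemma cd_iter {n k : ℕ} {f : ℝ → ℝ} (hf : ContDiff ℝ (n+k : ℕ) f) :
    ContDiff ℝ (n : ℕ) (iteratedDeriv k f) := by
  rw [iteratedDeriv_eq_iterate]
  exact ContDiff.iterate_deriv' n k (by exact_mod_cast hf)



lemma ibp2 {f : ℝ → ℝ} (hf : ContDiff ℝ 4 f) (h0 : f 0 = 0) (h1 : f 1 = 0)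
    (h20 : iteratedDeriv 2 f 0 = 0) (h21 : iteratedDeriv 2 f 1 = 0) :
    (∫ x in (0:ℝ)..1, iteratedDeriv 4 f x * f x) = ∫ x in (0:ℝ)..1, (iteratedDeriv 2 f x)^2 := by
  have hf4 : ContDiff ℝ ((4:ℕ) : ℕ) f := by exact_mod_cast hf
  have c3 : ContDiff ℝ (1:ℕ) (iteratedDeriv 3 f) := cd_iter (by exact_mod_cast hf4)
  have c2 : ContDiff ℝ (1:ℕ) (iteratedDeriv 2 f) := (cd_iter (n := 2) (by exact_mod_cast hf4)).of_le (by norm_num)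
  have c1 : ContDiff ℝ (1:ℕ) (deriv f) := by
    have : ContDiff ℝ (1:ℕ) (iteratedDeriv 1 f) := (cd_iter (n := 3) (k := 1) (by exact_mod_cast hf4)).of_le (by norm_num)
    rwa [iteratedDeriv_one] at this
  have e4 : iteratedDeriv 4 f = deriv (iteratedDeriv 3 f) := iteratedDeriv_succ
  have e3 : iteratedDeriv 3 f = deriv (iteratedDeriv 2 f) := iteratedDeriv_succ
  have e2 : iteratedDeriv 2 f = deriv (iteratedDeriv 1 f) := iteratedDeriv_succ
  have hc4 : Continuous (iteratedDeriv 4 f) := e4 ▸ c3.continuous_deriv le_rfl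
  have hc3 : Continuous (iteratedDeriv 3 f) := c3.continuous
  have hc2 : Continuous (iteratedDeriv 2 f) := c2.continuous
  have hcd : Continuous (deriv f) := c1.continuous
  have hG : ∀ x ∈ uIcc (0:ℝ) 1, HasDerivAt
      (fun y => iteratedDeriv 3 f y * f y - iteratedDeriv 2 f y * deriv f y)
      (iteratedDeriv 4 f x * f x - (iteratedDeriv 2 f x)^2) x := by
    intro x _
    have hd3 : HasDerivAt (iteratedDeriv 3 f) (iteratedDeriv 4 f x) x := by
      rw [e4]; exact hd_of_cd (by exact_mod_cast c3) x
    have hd2 : HasDerivAt (iteratedDeriv 2 f) (iteratedDeriv 3 f x) x := by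
      rw [e3]; exact hd_of_cd (by exact_mod_cast c2) x
    have hd1 : HasDerivAt (deriv f) (iteratedDeriv 2 f x) x := by
      rw [e2, iteratedDeriv_one]; exact hd_of_cd (by exact_mod_cast c1) x
    have hd0 : HasDerivAt f (deriv f x) x := hd_of_cd (hf.of_le (by norm_num)) x
    have := (hd3.mul hd0).sub (hd2.mul hd1)
    exact this.congr_deriv (by ring)
  have hInt : IntervalIntegrable (fun x => iteratedDeriv 4 f x * f x - (iteratedDeriv 2 f x)^2) volume 0 1 :=
    ((hc4.mul hf.continuous).sub (hc2.pow 2)).intervalIntegrable _ _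
  have key := intervalIntegral.integral_eq_sub_of_hasDerivAt hG hInt
  rw [h0, h1, h20, h21, mul_zero, mul_zero, zero_mul, zero_mul] at key
  rw [intervalIntegral.integral_sub (f := fun x => iteratedDeriv 4 f x * f x) (g := fun x => iteratedDeriv 2 f x ^ 2) ((hc4.mul hf.continuous).intervalIntegrable _ _)
    ((hc2.pow 2).intervalIntegrable _ _)] at key
  simp at key
  linarith



lemma hds_aux (x : ℝ) : HasDerivAt (fun y => Real.sin (Real.pi*y)) (Real.pi * Real.cos (Real.pi*x)) x := by
  have h1 : HasDerivAt (fun y : ℝ => Real.pi * y) Real.pi x := by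
    simpa using (hasDerivAt_id x).const_mul Real.pi
  have h2 := (Real.hasDerivAt_sin (Real.pi*x)).comp x h1
  rw [mul_comm] at h2
  exact h2

lemma hdc_aux (x : ℝ) : HasDerivAt (fun y => Real.cos (Real.pi*y)) (-(Real.pi * Real.sin (Real.pi*x))) x := by
  have h1 : HasDerivAt (fun y : ℝ => Real.pi * y) Real.pi x := by
    simpa using (hasDerivAt_id x).const_mul Real.pi
  have h2 := (Real.hasDerivAt_cos (Real.pi*x)).comp x h1
  rw [show -Real.sin (Real.pi*x) * Real.pi = -(Real.pi * Real.sin (Real.pi*x)) by ring] at h2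
  exact h2

lemma poincare {w : ℝ → ℝ} (hw : ContDiff ℝ 1 w) (h0 : w 0 = 0) (h1 : w 1 = 0) :
    Real.pi^2 * ∫ x in (0:ℝ)..1, (w x)^2 ≤ ∫ x in (0:ℝ)..1, (deriv w x)^2 := by
  have hwc : Continuous w := hw.continuous
  have hwd : Continuous (deriv w) := hw.continuous_deriv le_rfl
  set g : ℝ → ℝ := fun x => (deriv w x)^2 - Real.pi^2 * (w x)^2 with hgdef
  have hgc : Continuous g := (hwd.pow 2).sub (continuous_const.mul (hwc.pow 2))
  suffices hkey : 0 ≤ ∫ x in (0:ℝ)..1, g x by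
    have hsplit : (∫ x in (0:ℝ)..1, g x)
        = (∫ x in (0:ℝ)..1, (deriv w x)^2) - Real.pi^2 * ∫ x in (0:ℝ)..1, (w x)^2 := by
      rw [hgdef, intervalIntegral.integral_sub (f := fun x => deriv w x ^ 2) (g := fun x => Real.pi^2 * w x ^ 2) ((hwd.pow 2).intervalIntegrable _ _)
        ((continuous_const.mul (hwc.pow 2)).intervalIntegrable _ _),
        intervalIntegral.integral_const_mul]
    linarith [hsplit ▸ hkey]
  set h : ℝ → ℝ := fun x => Real.pi * (w x)^2 * (Real.cos (Real.pi*x) / Real.sin (Real.pi*x)) with hhdef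
  set D : ℝ → ℝ := fun x => Real.pi * (2 * w x * deriv w x) * (Real.cos (Real.pi*x) / Real.sin (Real.pi*x))
      + Real.pi * (w x)^2 * ((-(Real.pi * Real.sin (Real.pi*x)) * Real.sin (Real.pi*x)
        - Real.cos (Real.pi*x) * (Real.pi * Real.cos (Real.pi*x))) / (Real.sin (Real.pi*x))^2) with hDdef
  have hsin_pos : ∀ x ∈ Ioo (0:ℝ) 1, 0 < Real.sin (Real.pi*x) := by
    intro x hx
    apply Real.sin_pos_of_pos_of_lt_pi (mul_pos Real.pi_pos hx.1)
    nlinarith [Real.pi_pos, hx.2]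
  have hderiv : ∀ x ∈ Ioo (0:ℝ) 1, HasDerivAt h (D x) x := by
    intro x hx
    have hsne : Real.sin (Real.pi*x) ≠ 0 := (hsin_pos x hx).ne'
    have hq : HasDerivAt (fun y => Real.cos (Real.pi*y) / Real.sin (Real.pi*y))
        ((-(Real.pi * Real.sin (Real.pi*x)) * Real.sin (Real.pi*x)
          - Real.cos (Real.pi*x) * (Real.pi * Real.cos (Real.pi*x))) / (Real.sin (Real.pi*x))^2) x :=
      (hdc_aux x).div (hds_aux x) hsne
    have hw2 : HasDerivAt (fun y => Real.pi * (w y)^2) (Real.pi * (2 * w x * deriv w x)) x := by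
      have := ((hd_of_cd hw x).pow 2).const_mul Real.pi
      exact this.congr_deriv (by ring)
    exact hw2.mul hq
  have hDleg : ∀ x ∈ Ioo (0:ℝ) 1, D x ≤ g x := by
    intro x hx
    have hs := hsin_pos x hx
    have hsne : Real.sin (Real.pi*x) ≠ 0 := hs.ne'
    have hmul : (g x - D x) * (Real.sin (Real.pi*x))^2
        = (deriv w x * Real.sin (Real.pi*x) - Real.pi * w x * Real.cos (Real.pi*x))^2 := by
      simp only [hgdef, hDdef]
      field_simp
      ring_nf
    have hs2 : 0 < (Real.sin (Real.pi*x))^2 := by positivity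
    nlinarith [sq_nonneg (deriv w x * Real.sin (Real.pi*x) - Real.pi * w x * Real.cos (Real.pi*x))]
  -- FTC on subintervals
  have hmain : ∀ᶠ ε in 𝓝[>] (0:ℝ), h (1-ε) - h ε ≤ ∫ x in ε..(1-ε), g x := by
    filter_upwards [Ioo_mem_nhdsGT_of_mem (by norm_num : (0:ℝ) ∈ Ico (0:ℝ) (1/2))] with ε hε
    have hεe : ε ≤ 1 - ε := by cases hε; linarith
    have hsub : Icc ε (1-ε) ⊆ Ioo (0:ℝ) 1 := by
      intro y hy; cases hε; cases hy; constructor <;> linarith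
    have huIcc : uIcc ε (1-ε) = Icc ε (1-ε) := uIcc_of_le hεe
    have hDcont : ContinuousOn D (Icc ε (1-ε)) := by
      apply ContinuousOn.add
      · apply ContinuousOn.mul
        · exact (continuous_const.mul ((continuous_const.mul hwc).mul hwd)).continuousOn
        · exact ContinuousOn.div (Real.continuous_cos.comp (continuous_const.mul continuous_id)).continuousOn
            (Real.continuous_sin.comp (continuous_const.mul continuous_id)).continuousOn
            (fun y hy => (hsin_pos y (hsub hy)).ne')
      · apply ContinuousOn.mul
        · exact (continuous_const.mul (hwc.pow 2)).continuousOn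
        · apply ContinuousOn.div
          · exact (((continuous_const.mul (Real.continuous_sin.comp (continuous_const.mul continuous_id))).neg.mul
              (Real.continuous_sin.comp (continuous_const.mul continuous_id))).sub
              ((Real.continuous_cos.comp (continuous_const.mul continuous_id)).mul
              (continuous_const.mul (Real.continuous_cos.comp (continuous_const.mul continuous_id))))).continuousOn
          · exact ((Real.continuous_sin.comp (continuous_const.mul continuous_id)).pow 2).continuousOn
          · intro y hy; exact pow_ne_zero 2 (hsin_pos y (hsub hy)).ne'
    have hDint : IntervalIntegrable D volume ε (1-ε) := (huIcc ▸ hDcont).intervalIntegrable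
    have hftc : (∫ x in ε..(1-ε), D x) = h (1-ε) - h ε := by
      apply intervalIntegral.integral_eq_sub_of_hasDerivAt
      · intro x hx; exact hderiv x (hsub (huIcc ▸ hx))
      · exact hDint
    rw [← hftc]
    apply intervalIntegral.integral_mono_on hεe hDint (hgc.intervalIntegrable _ _)
    intro x hx; exact hDleg x (hsub hx)
  -- limits
  set P : ℝ → ℝ := fun t => ∫ x in (0:ℝ)..t, g x with hPdef
  have hPcont : Continuous P :=
    intervalIntegral.continuous_primitive (fun a b => hgc.intervalIntegrable a b) 0
  have hFval : ∀ ε : ℝ, (∫ x in ε..(1-ε), g x) = P (1-ε) - P ε := by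
    intro ε
    have hadd := intervalIntegral.integral_add_adjacent_intervals (μ := volume) (hgc.intervalIntegrable 0 ε) (hgc.intervalIntegrable ε (1-ε))
    simp only [hPdef]
    linarith [hadd]
  have hFtend : Tendsto (fun ε => ∫ x in ε..(1-ε), g x) (𝓝[>] (0:ℝ)) (𝓝 (∫ x in (0:ℝ)..1, g x)) := by
    have : Tendsto (fun ε : ℝ => P (1-ε) - P ε) (𝓝 (0:ℝ)) (𝓝 (P 1 - P 0)) := by
      have t1 : Tendsto (fun ε : ℝ => 1 - ε) (𝓝 (0:ℝ)) (𝓝 (1:ℝ)) := by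
        simpa using (continuous_sub_left (1:ℝ)).tendsto (0:ℝ)
      exact ((hPcont.tendsto 1).comp t1).sub (hPcont.tendsto 0)
    have hP0 : P 0 = 0 := by simp [hPdef]
    have hP1 : P 1 = ∫ x in (0:ℝ)..1, g x := rfl
    rw [hP0, hP1, sub_zero] at this
    exact (this.mono_left nhdsWithin_le_nhds).congr (fun ε => (hFval ε).symm)
  -- boundary limits
  have hne0 : 𝓝[>] (0:ℝ) ≤ 𝓝[≠] (0:ℝ) := nhdsWithin_mono 0 (fun y hy => ne_of_gt hy)
  have hIoo_mem : Ioo (0:ℝ) (1/2) ∈ 𝓝[>] (0:ℝ) := Ioo_mem_nhdsGT_of_mem (by norm_num)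
  have hslope0 : Tendsto (fun ε => w ε / ε) (𝓝[>] (0:ℝ)) (𝓝 (deriv w 0)) := by
    have hs := (hasDerivAt_iff_tendsto_slope.mp (hd_of_cd hw 0)).mono_left hne0
    apply hs.congr
    intro ε
    simp [slope, h0, div_eq_inv_mul]
  have hsin_slope : Tendsto (fun ε => Real.sin (Real.pi*ε)/ε) (𝓝[>] (0:ℝ)) (𝓝 Real.pi) := by
    have hd := hds_aux 0
    rw [show Real.pi * (0:ℝ) = 0 by ring, Real.cos_zero, mul_one] at hd
    have hs := (hasDerivAt_iff_tendsto_slope.mp hd).mono_left hne0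
    apply hs.congr
    intro ε
    simp [slope, div_eq_inv_mul]
  have hinv : Tendsto (fun ε => ε / Real.sin (Real.pi*ε)) (𝓝[>] (0:ℝ)) (𝓝 Real.pi⁻¹) := by
    have := hsin_slope.inv₀ Real.pi_ne_zero
    apply this.congr
    intro ε
    rw [inv_div]
  have hid0 : Tendsto (fun ε : ℝ => ε) (𝓝[>] (0:ℝ)) (𝓝 0) :=
    tendsto_id.mono_left nhdsWithin_le_nhds
  have hcos0 : Tendsto (fun ε => Real.cos (Real.pi*ε)) (𝓝[>] (0:ℝ)) (𝓝 1) := by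
    have : Tendsto (fun ε : ℝ => Real.cos (Real.pi*ε)) (𝓝 (0:ℝ)) (𝓝 (Real.cos (Real.pi*0))) :=
      (Real.continuous_cos.comp (continuous_const.mul continuous_id)).tendsto 0
    rw [show Real.pi * (0:ℝ) = 0 by ring, Real.cos_zero] at this
    exact this.mono_left nhdsWithin_le_nhds
  have hL1 : Tendsto (fun ε => h ε) (𝓝[>] (0:ℝ)) (𝓝 0) := by
    have hE : Tendsto (fun ε => Real.pi * (w ε / ε)^2 * Real.cos (Real.pi*ε) * (ε * (ε / Real.sin (Real.pi*ε))))
        (𝓝[>] (0:ℝ)) (𝓝 (Real.pi * (deriv w 0)^2 * 1 * (0 * Real.pi⁻¹))) :=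
      (((tendsto_const_nhds.mul (hslope0.pow 2)).mul hcos0)).mul (hid0.mul hinv)
    rw [show Real.pi * (deriv w 0)^2 * 1 * (0 * Real.pi⁻¹) = 0 by ring] at hE
    apply hE.congr'
    filter_upwards [hIoo_mem] with ε hε
    have hεne : ε ≠ 0 := ne_of_gt hε.1
    have hsne : Real.sin (Real.pi*ε) ≠ 0 := (hsin_pos ε ⟨hε.1, by linarith [hε.2]⟩).ne'
    simp only [hhdef]
    field_simp
  have hmap1 : Tendsto (fun ε : ℝ => 1 - ε) (𝓝[>] (0:ℝ)) (𝓝[≠] (1:ℝ)) := by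
    apply tendsto_nhdsWithin_of_tendsto_nhds_of_eventually_within
    · have : Tendsto (fun ε : ℝ => 1 - ε) (𝓝 (0:ℝ)) (𝓝 (1-0:ℝ)) :=
        (continuous_const.sub continuous_id).tendsto 0
      rw [sub_zero] at this
      exact this.mono_left nhdsWithin_le_nhds
    · filter_upwards [self_mem_nhdsWithin] with ε (hε : 0 < ε)
      simp only [mem_compl_iff, mem_singleton_iff]
      intro hcontra
      linarith [hcontra]
  have hslope1 : Tendsto (fun ε => slope w 1 (1-ε)) (𝓝[>] (0:ℝ)) (𝓝 (deriv w 1)) :=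
    (hasDerivAt_iff_tendsto_slope.mp (hd_of_cd hw 1)).comp hmap1
  have hcos1 : Tendsto (fun ε => Real.cos (Real.pi*(1-ε))) (𝓝[>] (0:ℝ)) (𝓝 (-1)) := by
    have : Tendsto (fun ε : ℝ => Real.cos (Real.pi*(1-ε))) (𝓝 (0:ℝ)) (𝓝 (Real.cos (Real.pi*(1-0)))) :=
      (Real.continuous_cos.comp (continuous_const.mul (continuous_const.sub continuous_id))).tendsto 0
    rw [show Real.pi * ((1:ℝ)-0) = Real.pi by ring, Real.cos_pi] at this
    exact this.mono_left nhdsWithin_le_nhds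
  have hL2 : Tendsto (fun ε => h (1-ε)) (𝓝[>] (0:ℝ)) (𝓝 0) := by
    have hE : Tendsto (fun ε => Real.pi * (slope w 1 (1-ε))^2 * Real.cos (Real.pi*(1-ε)) * (ε * (ε / Real.sin (Real.pi*ε))))
        (𝓝[>] (0:ℝ)) (𝓝 (Real.pi * (deriv w 1)^2 * (-1) * (0 * Real.pi⁻¹))) :=
      ((tendsto_const_nhds.mul (hslope1.pow 2)).mul hcos1).mul (hid0.mul hinv)
    rw [show Real.pi * (deriv w 1)^2 * (-1) * (0 * Real.pi⁻¹) = 0 by ring] at hE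
    apply hE.congr'
    filter_upwards [hIoo_mem] with ε hε
    have hεne : ε ≠ 0 := ne_of_gt hε.1
    have hsne : Real.sin (Real.pi*ε) ≠ 0 := (hsin_pos ε ⟨hε.1, by linarith [hε.2]⟩).ne'
    have hsin_eq : Real.sin (Real.pi*(1-ε)) = Real.sin (Real.pi*ε) := by
      rw [show Real.pi*(1-ε) = Real.pi - Real.pi*ε by ring, Real.sin_pi_sub]
    have hslope_eq : slope w 1 (1-ε) = w (1-ε) / (-ε) := by
      have hrfl : slope w 1 (1-ε) = ((1-ε) - 1)⁻¹ * (w (1-ε) - w 1) := rfl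
      rw [hrfl, h1, show (1-ε) - (1:ℝ) = -ε by ring, sub_zero, div_eq_inv_mul]
    simp only [hhdef, hsin_eq, hslope_eq]
    field_simp
  have hL : Tendsto (fun ε => h (1-ε) - h ε) (𝓝[>] (0:ℝ)) (𝓝 0) := by
    have := hL2.sub hL1
    rwa [sub_zero] at this
  exact le_of_tendsto_of_tendsto hL hFtend hmain

lemma zero_of_integral_sq_zero {f : ℝ → ℝ} (hf : Continuous f)
    (hz : (∫ x in (0:ℝ)..1, (f x)^2) = 0) {x : ℝ} (hx : x ∈ Ioo (0:ℝ) 1) : f x = 0 := by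
  by_contra hne
  have hpos : 0 < ∫ y in (0:ℝ)..1, (f y)^2 := by
    rw [intervalIntegral.integral_pos_iff_support_of_nonneg_ae
      (ae_of_all _ fun y => sq_nonneg (f y)) (((hf.pow 2)).intervalIntegrable _ _)]
    refine ⟨by norm_num, ?_⟩
    have hU : IsOpen ({y | f y ^ 2 ≠ 0} ∩ Ioo 0 1) :=
      ((isOpen_ne_fun (hf.pow 2) continuous_const)).inter isOpen_Ioo
    have hne' : ({y | f y ^ 2 ≠ 0} ∩ Ioo 0 1).Nonempty := ⟨x, pow_ne_zero 2 hne, hx⟩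
    have hsubset : ({y | f y ^ 2 ≠ 0} ∩ Ioo 0 1) ⊆ Function.support (fun y => f y ^ 2) ∩ Ioc 0 1 := by
      intro y hy
      exact ⟨hy.1, hy.2.1, le_of_lt hy.2.2⟩
    calc (0:ENNReal) < volume ({y | f y ^ 2 ≠ 0} ∩ Ioo 0 1) := hU.measure_pos volume hne'
      _ ≤ _ := measure_mono hsubset
  rw [hz] at hpos
  exact lt_irrefl 0 hpos

/-- tested identity for one beam -/
lemma tested {a kk : ℝ} {f r : ℝ → ℝ} (hf : ContDiff ℝ 4 f) (hr : Continuous r)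
    (heq : ∀ x ∈ Set.Icc (0:ℝ) 1,
      iteratedDeriv 4 f x - a * iteratedDeriv 2 f x + kk * r x = 0)
    (h0 : f 0 = 0) (h1 : f 1 = 0) (h20 : iteratedDeriv 2 f 0 = 0) (h21 : iteratedDeriv 2 f 1 = 0) :
    (∫ x in (0:ℝ)..1, (iteratedDeriv 2 f x)^2) + a * energy f
      + kk * (∫ x in (0:ℝ)..1, r x * f x) = 0 := by
  have hf4 : ContDiff ℝ ((0:ℕ)+(4:ℕ) : ℕ) f := by exact_mod_cast hf
  have hf2 : ContDiff ℝ ((2:ℕ)+(2:ℕ) : ℕ) f := by exact_mod_cast hf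
  have hc4 : Continuous (iteratedDeriv 4 f) := (cd_iter hf4).continuous
  have hc2 : Continuous (iteratedDeriv 2 f) := (cd_iter hf2).continuous
  have hcf : Continuous f := hf.continuous
  have hi1 : IntervalIntegrable (fun x => iteratedDeriv 4 f x * f x) volume 0 1 :=
    (hc4.mul hcf).intervalIntegrable _ _
  have hi2 : IntervalIntegrable (fun x => a * (iteratedDeriv 2 f x * f x)) volume 0 1 :=
    (continuous_const.mul (hc2.mul hcf)).intervalIntegrable _ _
  have hi3 : IntervalIntegrable (fun x => kk * (r x * f x)) volume 0 1 :=
    (continuous_const.mul (hr.mul hcf)).intervalIntegrable _ _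
  have hIu : (∫ x in (0:ℝ)..1, (iteratedDeriv 4 f x * f x - a * (iteratedDeriv 2 f x * f x)
      + kk * (r x * f x))) = 0 := by
    have hcong : ∀ x ∈ uIcc (0:ℝ) 1, (iteratedDeriv 4 f x * f x - a * (iteratedDeriv 2 f x * f x)
        + kk * (r x * f x)) = (fun _ => (0:ℝ)) x := by
      intro x hx
      rw [uIcc_of_le (by norm_num : (0:ℝ) ≤ 1)] at hx
      have he := heq x hx
      calc iteratedDeriv 4 f x * f x - a * (iteratedDeriv 2 f x * f x) + kk * (r x * f x)
          = (iteratedDeriv 4 f x - a * iteratedDeriv 2 f x + kk * r x) * f x := by ring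
        _ = 0 := by rw [he, zero_mul]
    rw [intervalIntegral.integral_congr hcong, intervalIntegral.integral_zero]
  rw [intervalIntegral.integral_add (hi1.sub hi2) hi3,
    intervalIntegral.integral_sub hi1 hi2,
    intervalIntegral.integral_const_mul, intervalIntegral.integral_const_mul,
    ibp2 hf h0 h1 h20 h21, ibp1 (hf.of_le (by norm_num)) h0 h1] at hIu
  unfold energy
  linarith [hIu]

set_option maxHeartbeats 1000000 in
theorem stmt0 (β ϱ k : ℝ) (hϱ : 0 < ϱ) (hk : 0 < k) (hβ : β ≥ -Real.pi ^ 2)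
    (u v : ℝ → ℝ) (h : DBSol β ϱ k u v) :
    ∀ x ∈ Set.Icc (0:ℝ) 1, u x = 0 ∧ v x = 0 := by
  obtain ⟨hu, hv, hequ, heqv, hu0, hu1, hu20, hu21, hv0, hv1, hv20, hv21⟩ := h
  have hu1c : ContDiff ℝ 1 u := hu.of_le (by norm_num)
  have hv1c : ContDiff ℝ 1 v := hv.of_le (by norm_num)
  have hcu : Continuous u := hu.continuous
  have hcv : Continuous v := hv.continuous
  have hc2u : Continuous (iteratedDeriv 2 u) :=
    (cd_iter (n := 2) (k := 2) (by exact_mod_cast hu)).continuous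
  have hc2v : Continuous (iteratedDeriv 2 v) :=
    (cd_iter (n := 2) (k := 2) (by exact_mod_cast hv)).continuous
  -- tested identities
  have hIu := tested (r := fun x => u x - v x) hu (hcu.sub hcv) hequ hu0 hu1 hu20 hu21
  have heqv' : ∀ x ∈ Set.Icc (0:ℝ) 1,
      iteratedDeriv 4 v x - (β + ϱ * energy v) * iteratedDeriv 2 v x + (-k) * (u x - v x) = 0 := by
    intro x hx
    have := heqv x hx
    linarith [this]
  have hIv := tested (r := fun x => u x - v x) hv (hcu.sub hcv) heqv' hv0 hv1 hv20 hv21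
  -- K term
  have hKsplit : (∫ x in (0:ℝ)..1, (u x - v x)^2)
      = (∫ x in (0:ℝ)..1, (u x - v x) * u x) - ∫ x in (0:ℝ)..1, (u x - v x) * v x := by
    rw [← intervalIntegral.integral_sub (f := fun x => (u x - v x) * u x) (g := fun x => (u x - v x) * v x) (((hcu.sub hcv).mul hcu).intervalIntegrable _ _)
      (((hcu.sub hcv).mul hcv).intervalIntegrable _ _)]
    apply intervalIntegral.integral_congr
    intro x _
    ring
  have hKpos : 0 ≤ ∫ x in (0:ℝ)..1, (u x - v x)^2 :=
    intervalIntegral.integral_nonneg (by norm_num) (fun x _ => sq_nonneg _)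
  -- nonnegativity
  have hnn : ∀ f : ℝ → ℝ, 0 ≤ ∫ x in (0:ℝ)..1, (f x)^2 :=
    fun f => intervalIntegral.integral_nonneg (by norm_num) (fun x _ => sq_nonneg _)
  have hAu0 : 0 ≤ energy u := hnn _
  have hAv0 : 0 ≤ energy v := hnn _
  have hBu0 : 0 ≤ ∫ x in (0:ℝ)..1, (iteratedDeriv 2 u x)^2 := hnn _
  have hBv0 : 0 ≤ ∫ x in (0:ℝ)..1, (iteratedDeriv 2 v x)^2 := hnn _
  have hCu0 : 0 ≤ ∫ x in (0:ℝ)..1, (u x)^2 := hnn _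
  have hCv0 : 0 ≤ ∫ x in (0:ℝ)..1, (v x)^2 := hnn _
  -- Cauchy-Schwarz plus ibp
  have hcs : ∀ (f : ℝ → ℝ), ContDiff ℝ 4 f → f 0 = 0 → f 1 = 0 →
      Continuous (iteratedDeriv 2 f) →
      (energy f)^2 ≤ (∫ x in (0:ℝ)..1, (iteratedDeriv 2 f x)^2) * (∫ x in (0:ℝ)..1, (f x)^2) := by
    intro f hf h0 h1 hc2
    have hibp := ibp1 (hf.of_le (by norm_num)) h0 h1
    have hcs2 := cs_int (iteratedDeriv 2 f) f hc2 hf.continuous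
    rw [hibp] at hcs2
    unfold energy
    calc (∫ s in (0:ℝ)..1, (deriv f s)^2)^2
        = (-∫ x in (0:ℝ)..1, (deriv f x)^2)^2 := by ring
      _ ≤ _ := hcs2
  have hcsu := hcs u hu hu0 hu1 hc2u
  have hcsv := hcs v hv hv0 hv1 hc2v
  -- Poincare
  have hpu : Real.pi^2 * ∫ x in (0:ℝ)..1, (u x)^2 ≤ energy u := poincare hu1c hu0 hu1
  have hpv : Real.pi^2 * ∫ x in (0:ℝ)..1, (v x)^2 ≤ energy v := poincare hv1c hv0 hv1
  -- Bu ≥ π² Au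
  have hBge : ∀ A B C : ℝ, 0 ≤ A → 0 ≤ B → 0 ≤ C → A^2 ≤ B * C → Real.pi^2 * C ≤ A →
      Real.pi^2 * A ≤ B := by
    intro A B C hA hB hC hABC hpc
    rcases eq_or_lt_of_le hA with hA0 | hApos
    · rw [← hA0]; simpa using hB
    · have h1 : Real.pi^2 * A^2 ≤ Real.pi^2 * (B * C) :=
        mul_le_mul_of_nonneg_left hABC (sq_nonneg _)
      have h2 : B * (Real.pi^2 * C) ≤ B * A := mul_le_mul_of_nonneg_left hpc hB
      have h3 : (Real.pi^2 * A) * A ≤ B * A := by nlinarith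
      exact le_of_mul_le_mul_right h3 hApos
  have hBgeu := hBge _ _ _ hAu0 hBu0 hCu0 hcsu hpu
  have hBgev := hBge _ _ _ hAv0 hBv0 hCv0 hcsv hpv
  -- combine
  have hβ' : 0 ≤ β + Real.pi^2 := by linarith
  have hsum : ϱ * (energy u)^2 + ϱ * (energy v)^2 ≤ 0 := by
    nlinarith [mul_nonneg hβ' hAu0, mul_nonneg hβ' hAv0, mul_nonneg hk.le hKpos, hKsplit]
  have hsqz : ∀ a b : ℝ, ϱ * a^2 + ϱ * b^2 ≤ 0 → a = 0 := by
    intro a b hab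
    have h2 : 0 ≤ ϱ * a^2 := mul_nonneg hϱ.le (sq_nonneg _)
    have h3 : 0 ≤ ϱ * b^2 := mul_nonneg hϱ.le (sq_nonneg _)
    have h4 : ϱ * a^2 = 0 := le_antisymm (by linarith) h2
    have h5 : a^2 = 0 := (mul_eq_zero.mp h4).resolve_left hϱ.ne'
    exact pow_eq_zero_iff two_ne_zero |>.mp h5
  have hAuz : energy u = 0 := hsqz _ _ hsum
  have hAvz : energy v = 0 := hsqz _ (energy u) (by linarith)
  have hpisq : 0 < Real.pi^2 := by positivity
  have hCz : ∀ C : ℝ, 0 ≤ C → Real.pi^2 * C ≤ 0 → C = 0 := by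
    intro C hC0 hCle
    refine le_antisymm ?_ hC0
    by_contra hpos
    push_neg at hpos
    nlinarith [mul_pos hpisq hpos]
  have hCuz : (∫ x in (0:ℝ)..1, (u x)^2) = 0 := hCz _ hCu0 (by linarith)
  have hCvz : (∫ x in (0:ℝ)..1, (v x)^2) = 0 := hCz _ hCv0 (by linarith)
  intro x hx
  rcases eq_or_lt_of_le hx.1 with h0x | h0x
  · rw [← h0x]; exact ⟨hu0, hv0⟩
  rcases eq_or_lt_of_le hx.2 with hx1 | hx1
  · rw [hx1]; exact ⟨hu1, hv1⟩
  exact ⟨zero_of_integral_sq_zero hcu hCuz ⟨h0x, hx1⟩,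
    zero_of_integral_sq_zero hcv hCvz ⟨h0x, hx1⟩⟩
end

section
/- Let n be a positive integer with λ_n < −β ≤ μ_n, and set a = √((−β − λ_n)/(ϱ·λ_n)). Then the set of pairs (α, γ) ∈ ℝ² with (α, γ) ≠ (0, 0) such that the pair (α·e_n, γ·e_n) is a solution of the double-beam system is exactly the two-element set {(a, a), (−a, −a)}. -/
open Real Set

/- Auxiliary lemmas -/

lemma hasDerivAt_Asin (A c x : ℝ) :
    HasDerivAt (fun y => A * Real.sin (c * y)) (A * c * Real.cos (c * x)) x := by
  have h1 : HasDerivAt (fun y : ℝ => c * y) c x := by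
    simpa using (hasDerivAt_id x).const_mul c
  have h2 := (Real.hasDerivAt_sin (c * x)).comp x h1
  have h3 := h2.const_mul A
  exact h3.congr_deriv (by ring)

lemma hasDerivAt_Acos (A c x : ℝ) :
    HasDerivAt (fun y => A * Real.cos (c * y)) (-(A * c) * Real.sin (c * x)) x := by
  have h1 : HasDerivAt (fun y : ℝ => c * y) c x := by
    simpa using (hasDerivAt_id x).const_mul c
  have h2 := (Real.hasDerivAt_cos (c * x)).comp x h1
  have h3 := h2.const_mul A
  exact h3.congr_deriv (by ring)

lemma deriv_Asin (A c : ℝ) :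
    deriv (fun y => A * Real.sin (c * y)) = fun x => (A * c) * Real.cos (c * x) :=
  funext fun x => (hasDerivAt_Asin A c x).deriv

lemma deriv_Acos (A c : ℝ) :
    deriv (fun y => A * Real.cos (c * y)) = fun x => (-(A * c)) * Real.sin (c * x) :=
  funext fun x => (hasDerivAt_Acos A c x).deriv

lemma it2_Asin (A c : ℝ) :
    iteratedDeriv 2 (fun y => A * Real.sin (c * y)) = fun x => (-(A * c * c)) * Real.sin (c * x) := by
  rw [show (2 : ℕ) = 1 + 1 from rfl, iteratedDeriv_succ, iteratedDeriv_one, deriv_Asin,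
    deriv_Acos]

lemma it4_Asin (A c : ℝ) :
    iteratedDeriv 4 (fun y => A * Real.sin (c * y)) =
      fun x => (-(-(A * c * c) * c * c)) * Real.sin (c * x) := by
  rw [show (4 : ℕ) = 2 + 1 + 1 from rfl, iteratedDeriv_succ, iteratedDeriv_succ, it2_Asin,
    deriv_Asin, deriv_Acos]

lemma cd_Asin (A c : ℝ) : ContDiff ℝ 4 (fun x : ℝ => A * Real.sin (c * x)) :=
  (contDiff_const.mul (Real.contDiff_sin.comp (contDiff_const.mul contDiff_id))).of_le le_top

lemma energy_Asin (A : ℝ) (n : ℕ) (hn : 0 < n) :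
    energy (fun x => A * Real.sin (((n : ℝ) * Real.pi) * x)) = A ^ 2 * ((n : ℝ) * Real.pi) ^ 2 / 2 := by
  set c : ℝ := (n : ℝ) * Real.pi with hc
  have hcpos : 0 < c := by
    apply mul_pos _ Real.pi_pos
    exact_mod_cast hn
  have hc0 : c ≠ 0 := ne_of_gt hcpos
  unfold energy
  rw [deriv_Asin]
  have h1 : ∀ s : ℝ, ((A * c) * Real.cos (c * s)) ^ 2 = (A * c) ^ 2 * (Real.cos (c * s)) ^ 2 := by
    intro s; ring
  simp_rw [h1]
  rw [intervalIntegral.integral_const_mul]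
  have h2 : (∫ x in (0:ℝ)..1, Real.cos (c * x) ^ 2) = c⁻¹ • ∫ x in (c * 0)..(c * 1), Real.cos x ^ 2 :=
    intervalIntegral.integral_comp_mul_left (fun x => Real.cos x ^ 2) hc0
  rw [h2]
  rw [mul_zero, mul_one, integral_cos_sq]
  have hsin : Real.sin c = 0 := by
    rw [hc]; exact Real.sin_nat_mul_pi n
  rw [hsin]
  field_simp
  simp only [smul_eq_mul, Real.cos_zero, Real.sin_zero]
  field_simp
  ring

lemma lam_eq (n : ℕ) : lam n = ((n : ℝ) * Real.pi) ^ 2 := by unfold lam; ring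

set_option maxHeartbeats 2000000 in
theorem stmt2 (β ϱ k : ℝ) (hϱ : 0 < ϱ) (hk : 0 < k) (n : ℕ) (hn : 0 < n)
    (h1 : lam n < -β) (h2 : -β ≤ 2 * k / lam n + lam n)
    (a : ℝ) (ha : a = Real.sqrt ((-β - lam n) / (ϱ * lam n))) :
    {p : ℝ × ℝ | p ≠ (0, 0) ∧
        DBSol β ϱ k (fun x => p.1 * ee n x) (fun x => p.2 * ee n x)}
      = {(a, a), (-a, -a)} := by
  set c : ℝ := (n : ℝ) * Real.pi with hcdef
  set L : ℝ := lam n with hLdef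
  have hLc : L = c ^ 2 := lam_eq n
  have hcpos : 0 < c := by
    apply mul_pos _ Real.pi_pos
    exact_mod_cast hn
  have hLpos : 0 < L := by rw [hLc]; positivity
  clear_value c L
  have hs2 : (Real.sqrt 2) ^ 2 = 2 := Real.sq_sqrt (by norm_num)
  have hs2pos : (0:ℝ) < Real.sqrt 2 := Real.sqrt_pos.mpr (by norm_num)
  -- a² = (-β - L)/(ϱ L), a > 0
  have hfracpos : 0 < (-β - L) / (ϱ * L) := by
    apply div_pos (by linarith) (mul_pos hϱ hLpos)
  have hapos : 0 < a := by rw [ha]; exact Real.sqrt_pos.mpr hfracpos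
  have ha2 : a ^ 2 = (-β - L) / (ϱ * L) := by rw [ha]; exact Real.sq_sqrt hfracpos.le
  have ha2' : ϱ * a ^ 2 * L = -β - L := by
    rw [ha2]; field_simp
  -- rewrite of α • eₙ
  have hfun : ∀ t : ℝ, (fun x => t * ee n x) = fun x => (t * Real.sqrt 2) * Real.sin (c * x) := by
    intro t; funext x; simp only [ee, hcdef]; ring_nf
  -- key helper: DBSol for equal pair with t² = a²
  have hsol : ∀ t : ℝ, β + ϱ * t ^ 2 * L = -L →
      DBSol β ϱ k (fun x => t * ee n x) (fun x => t * ee n x) := by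
    intro t ht
    rw [hfun t]
    set A : ℝ := t * Real.sqrt 2 with hA
    have hE : energy (fun x => A * Real.sin (c * x)) = A ^ 2 * c ^ 2 / 2 := by
      rw [hcdef]; exact energy_Asin A n hn
    have hA2 : A ^ 2 = 2 * t ^ 2 := by rw [hA]; nlinarith [hs2]
    have ht' : β + ϱ * t ^ 2 * c ^ 2 = -(c ^ 2) := by rw [hLc] at ht; linarith
    refine ⟨cd_Asin A c, cd_Asin A c, ?_, ?_, ?_, ?_, ?_, ?_, ?_, ?_, ?_, ?_⟩
    · intro x hx
      rw [it4_Asin, it2_Asin, hE]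
      linear_combination (A * c ^ 2 * Real.sin (c * x)) * ht' +
        (ϱ * A * c ^ 4 * Real.sin (c * x) / 2) * hA2
    · intro x hx
      rw [it4_Asin, it2_Asin, hE]
      linear_combination (A * c ^ 2 * Real.sin (c * x)) * ht' +
        (ϱ * A * c ^ 4 * Real.sin (c * x) / 2) * hA2
    · simp
    · simp [hcdef, Real.sin_nat_mul_pi]
    · rw [it2_Asin]; simp
    · rw [it2_Asin]; simp [hcdef, Real.sin_nat_mul_pi]
    · simp
    · simp [hcdef, Real.sin_nat_mul_pi]
    · rw [it2_Asin]; simp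
    · rw [it2_Asin]; simp [hcdef, Real.sin_nat_mul_pi]
  have hta : β + ϱ * a ^ 2 * L = -L := by rw [ha2']; ring
  have htna : β + ϱ * (-a) ^ 2 * L = -L := by rw [neg_pow]; simpa using hta
  ext ⟨α, γ⟩
  simp only [Set.mem_setOf_eq, Set.mem_insert_iff, Set.mem_singleton_iff, ne_eq,
    Prod.mk.injEq, not_and]
  constructor
  · rintro ⟨hne, hdb⟩
    -- extract scalar equations
    rw [hfun α, hfun γ] at hdb
    obtain ⟨-, -, heq1, heq2, -⟩ := hdb
    set x₀ : ℝ := 1 / (2 * (n : ℝ)) with hx₀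
    have hn' : (0:ℝ) < (n : ℝ) := by exact_mod_cast hn
    have hx₀mem : x₀ ∈ Set.Icc (0:ℝ) 1 := by
      constructor
      · positivity
      · rw [hx₀, div_le_one (by positivity)]
        have : (1:ℝ) ≤ (n : ℝ) := by exact_mod_cast hn
        linarith
    have hsinx₀ : Real.sin (c * x₀) = 1 := by
      have : c * x₀ = Real.pi / 2 := by
        rw [hcdef, hx₀]; field_simp
      rw [this, Real.sin_pi_div_two]
    have hE1 := heq1 x₀ hx₀mem
    have hE2 := heq2 x₀ hx₀mem
    have hEα : energy (fun x => (α * Real.sqrt 2) * Real.sin (c * x)) = (α * Real.sqrt 2) ^ 2 * c ^ 2 / 2 := by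
      rw [hcdef]; exact energy_Asin _ n hn
    have hEγ : energy (fun x => (γ * Real.sqrt 2) * Real.sin (c * x)) = (γ * Real.sqrt 2) ^ 2 * c ^ 2 / 2 := by
      rw [hcdef]; exact energy_Asin _ n hn
    rw [it4_Asin, it2_Asin] at hE1
    rw [it4_Asin, it2_Asin] at hE2
    simp only [hEα, hEγ, hsinx₀] at hE1 hE2
    -- divide out by √2
    have hs2ne : Real.sqrt 2 ≠ 0 := ne_of_gt hs2pos
    have hX1 : α * c ^ 4 + (β + ϱ * α ^ 2 * c ^ 2) * (α * c ^ 2) + k * (α - γ) = 0 := by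
      have key : Real.sqrt 2 * (α * c ^ 4 + (β + ϱ * α ^ 2 * c ^ 2) * (α * c ^ 2) + k * (α - γ)) = 0 := by
        linear_combination hE1 - (ϱ * α ^ 3 * c ^ 4 * Real.sqrt 2 / 2) * hs2
      rcases mul_eq_zero.mp key with h | h
      · exact absurd h hs2ne
      · exact h
    have hX2 : γ * c ^ 4 + (β + ϱ * γ ^ 2 * c ^ 2) * (γ * c ^ 2) - k * (α - γ) = 0 := by
      have key : Real.sqrt 2 * (γ * c ^ 4 + (β + ϱ * γ ^ 2 * c ^ 2) * (γ * c ^ 2) - k * (α - γ)) = 0 := by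
        linear_combination hE2 - (ϱ * γ ^ 3 * c ^ 4 * Real.sqrt 2 / 2) * hs2
      rcases mul_eq_zero.mp key with h | h
      · exact absurd h hs2ne
      · exact h
    clear heq1 heq2 hE1 hE2 hEα hEγ hsinx₀ hx₀mem hsol hfun hta htna hx₀ x₀ hn' 
    -- not both zero
    have hnot : ¬(α = 0 ∧ γ = 0) := by
      intro ⟨h0, h0'⟩; exact hne h0 h0'
    have hSpos : 0 < α ^ 2 + α * γ + γ ^ 2 := by
      rcases eq_or_ne α 0 with h0 | h0
      · have hγ : γ ≠ 0 := fun hg => hnot ⟨h0, hg⟩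
        have : 0 < γ ^ 2 := lt_of_le_of_ne (sq_nonneg γ) (Ne.symm (pow_ne_zero 2 hγ))
        nlinarith [sq_nonneg (2 * α + γ)]
      · have : 0 < α ^ 2 := lt_of_le_of_ne (sq_nonneg α) (Ne.symm (pow_ne_zero 2 h0))
        nlinarith [sq_nonneg (α + 2 * γ)]
    -- α = γ
    have hβL : -β * L ≤ 2 * k + L ^ 2 := by
      have hmul := mul_le_mul_of_nonneg_right h2 hLpos.le
      have hrw : (2 * k / L + L) * L = 2 * k + L ^ 2 := by field_simp
      linarith
    have hfacpos : 0 < c ^ 4 + β * c ^ 2 + ϱ * c ^ 4 * (α ^ 2 + α * γ + γ ^ 2) + 2 * k := by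
      have h4 : c ^ 4 = L ^ 2 := by rw [hLc]; ring
      have hc2 : c ^ 2 = L := hLc.symm
      rw [h4, hc2]
      nlinarith [mul_pos (mul_pos hϱ (pow_pos hLpos 2)) hSpos]
    have hdiff : (α - γ) * (c ^ 4 + β * c ^ 2 + ϱ * c ^ 4 * (α ^ 2 + α * γ + γ ^ 2) + 2 * k) = 0 := by
      linear_combination hX1 - hX2
    have hαγ : α = γ := by
      rcases mul_eq_zero.mp hdiff with h | h
      · linarith [sub_eq_zero.mp h]
      · exact absurd h (ne_of_gt hfacpos)
    have hα0 : α ≠ 0 := by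
      intro h0; exact hnot ⟨h0, hαγ ▸ h0⟩
    -- α² = a²
    have hfac0 : c ^ 2 + β + ϱ * α ^ 2 * c ^ 2 = 0 := by
      have : α * c ^ 2 * (c ^ 2 + β + ϱ * α ^ 2 * c ^ 2) = 0 := by
        rw [← hαγ] at hX1
        linear_combination hX1
      rcases mul_eq_zero.mp this with h | h
      · exact absurd h (mul_ne_zero hα0 (pow_ne_zero 2 (ne_of_gt hcpos)))
      · exact h
    have hαsq : α ^ 2 = a ^ 2 := by
      have hc2 : c ^ 2 = L := hLc.symm
      rw [hc2] at hfac0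
      have hkey : ϱ * α ^ 2 * L = -β - L := by linarith
      rw [ha2, eq_div_iff (ne_of_gt (mul_pos hϱ hLpos))]
      linear_combination hkey
    have : (α - a) * (α + a) = 0 := by linear_combination hαsq
    rcases mul_eq_zero.mp this with h | h
    · left; constructor
      · linarith [sub_eq_zero.mp h]
      · rw [← hαγ]; linarith [sub_eq_zero.mp h]
    · right; constructor
      · linarith
      · rw [← hαγ]; linarith
  · rintro (⟨hα, hγ⟩ | ⟨hα, hγ⟩)
    · constructor
      · intro h0; exfalso; rw [hα] at h0; exact ne_of_gt hapos h0
      · rw [hα, hγ]; exact hsol a hta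
    · constructor
      · intro h0; exfalso; rw [hα] at h0
        have : a = 0 := by linarith
        exact ne_of_gt hapos this
      · rw [hα, hγ]; exact hsol (-a) htna
end

section
/- Let n be a positive integer with μ_n < −β ≤ ν_n, and set a = √((−β − λ_n)/(ϱ·λ_n)) and b = √((−β − μ_n)/(ϱ·λ_n)). Then the set of pairs (α, γ) ∈ ℝ² with (α, γ) ≠ (0, 0) such that the pair (α·e_n, γ·e_n) is a solution of the double-beam system is exactly the four-element set {(a, a), (−a, −a), (b, −b), (−b, b)}. -/
open Real Set

section helpers

lemma hasDeriv_csin (c w x : ℝ) :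
    HasDerivAt (fun x => c * Real.sin (w * x)) (c * w * Real.cos (w * x)) x := by
  have hw : HasDerivAt (fun y : ℝ => w * y) w x := by
    simpa using (hasDerivAt_id x).const_mul w
  have h : HasDerivAt (fun x : ℝ => Real.sin (w * x)) (Real.cos (w * x) * w) x :=
    (Real.hasDerivAt_sin (w * x)).comp x hw
  have := h.const_mul c
  exact this.congr_deriv (by ring)

lemma hasDeriv_ccos (c w x : ℝ) :
    HasDerivAt (fun x => c * Real.cos (w * x)) (-(c * w) * Real.sin (w * x)) x := by
  have hw : HasDerivAt (fun y : ℝ => w * y) w x := by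
    simpa using (hasDerivAt_id x).const_mul w
  have h : HasDerivAt (fun x : ℝ => Real.cos (w * x)) (-Real.sin (w * x) * w) x :=
    (Real.hasDerivAt_cos (w * x)).comp x hw
  have := h.const_mul c
  exact this.congr_deriv (by ring)

lemma derivCsin (c w : ℝ) :
    deriv (fun x => c * Real.sin (w * x)) = fun x => c * w * Real.cos (w * x) := by
  funext x; exact (hasDeriv_csin c w x).deriv

lemma derivCcos (c w : ℝ) :
    deriv (fun x => c * Real.cos (w * x)) = fun x => -(c * w) * Real.sin (w * x) := by
  funext x; exact (hasDeriv_ccos c w x).deriv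

lemma iter2_csin (c w : ℝ) :
    iteratedDeriv 2 (fun x => c * Real.sin (w * x)) = fun x => (-(c * w ^ 2)) * Real.sin (w * x) := by
  rw [show (2:ℕ) = 1 + 1 from rfl, iteratedDeriv_succ, iteratedDeriv_one, derivCsin, derivCcos]
  funext x; ring

lemma iter4_csin (c w : ℝ) :
    iteratedDeriv 4 (fun x => c * Real.sin (w * x)) = fun x => (c * w ^ 4) * Real.sin (w * x) := by
  rw [show (4:ℕ) = 2 + 1 + 1 from rfl, iteratedDeriv_succ, iteratedDeriv_succ, iter2_csin,
    derivCsin, derivCcos]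
  funext x; ring

lemma integral_cos_sq_w (w : ℝ) (hw : w ≠ 0) :
    ∫ x in (0:ℝ)..1, Real.cos (w * x) ^ 2 = 1 / 2 + Real.sin w * Real.cos w / (2 * w) := by
  have key : ∀ x : ℝ, HasDerivAt
      (fun x => x / 2 + Real.sin (w * x) * Real.cos (w * x) / (2 * w))
      (Real.cos (w * x) ^ 2) x := by
    intro x
    have h1 : HasDerivAt (fun x : ℝ => x / 2) (1 / 2) x := (hasDerivAt_id x).div_const 2
    have hs := hasDeriv_csin 1 w x
    have hc := hasDeriv_ccos 1 w x
    simp only [one_mul] at hs hc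
    have h2 := ((hs.mul hc).div_const (2 * w))
    have h3 := h1.add h2
    refine h3.congr_deriv ?_
    have hpyth := Real.sin_sq_add_cos_sq (w * x)
    field_simp
    linear_combination -hpyth
  have hcont : IntervalIntegrable (fun x => Real.cos (w * x) ^ 2) MeasureTheory.volume 0 1 :=
    (Continuous.pow (Real.continuous_cos.comp (continuous_const.mul continuous_id)) 2).intervalIntegrable 0 1
  have := intervalIntegral.integral_eq_sub_of_hasDerivAt (fun x _ => key x) hcont
  rw [this]
  simp

lemma fun_eq (c : ℝ) (n : ℕ) :
    (fun x => c * ee n x) = fun x => (c * Real.sqrt 2) * Real.sin (((n:ℝ) * Real.pi) * x) := by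
  funext x; simp [ee]; ring

lemma lam_pos (n : ℕ) (hn : 0 < n) : 0 < lam n := by
  have hp := Real.pi_pos
  have hn' : (0:ℝ) < (n:ℝ) := by exact_mod_cast hn
  unfold lam
  positivity

lemma energy_smul_ee (c : ℝ) (n : ℕ) (hn : 0 < n) :
    energy (fun x => c * ee n x) = c ^ 2 * lam n := by
  have hw : ((n:ℝ) * Real.pi) ≠ 0 :=
    mul_ne_zero (Nat.cast_ne_zero.mpr hn.ne') Real.pi_ne_zero
  have h2 : Real.sqrt 2 ^ 2 = 2 := Real.sq_sqrt (by norm_num)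
  rw [fun_eq]
  unfold energy
  rw [derivCsin]
  simp only [mul_pow]
  rw [intervalIntegral.integral_const_mul, integral_cos_sq_w _ hw]
  simp only [Real.sin_nat_mul_pi, zero_mul, zero_div, add_zero, mul_pow, h2]
  unfold lam
  ring

lemma iter2_ee (c : ℝ) (n : ℕ) :
    iteratedDeriv 2 (fun x => c * ee n x) = fun x => -(c * lam n) * ee n x := by
  rw [fun_eq, iter2_csin]
  funext x; simp only [ee, lam]; ring

lemma iter4_ee (c : ℝ) (n : ℕ) :
    iteratedDeriv 4 (fun x => c * ee n x) = fun x => (c * lam n ^ 2) * ee n x := by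
  rw [fun_eq, iter4_csin]
  funext x; simp only [ee, lam]; ring

lemma contDiff_smul_ee (c : ℝ) (n : ℕ) : ContDiff ℝ 4 (fun x => c * ee n x) := by
  rw [fun_eq]
  exact contDiff_const.mul
    ((Real.contDiff_sin.of_le le_top).comp (contDiff_const.mul contDiff_id))

lemma ee_zero (n : ℕ) : ee n 0 = 0 := by simp [ee]

lemma ee_one (n : ℕ) : ee n 1 = 0 := by
  simp [ee, Real.sin_nat_mul_pi]

lemma sol_iff (β ϱ k : ℝ) (n : ℕ) (hn : 0 < n) (α γ : ℝ) :
    DBSol β ϱ k (fun x => α * ee n x) (fun x => γ * ee n x) ↔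
      (lam n ^ 2 * α + (β + ϱ * (α ^ 2 * lam n)) * (lam n * α) + k * (α - γ) = 0 ∧
       lam n ^ 2 * γ + (β + ϱ * (γ ^ 2 * lam n)) * (lam n * γ) - k * (α - γ) = 0) := by
  constructor
  · rintro ⟨-, -, hu, hv, -⟩
    have hx₀ : (1 / (2 * (n:ℝ))) ∈ Set.Icc (0:ℝ) 1 := by
      have hn' : (1:ℝ) ≤ (n:ℝ) := by exact_mod_cast hn
      constructor
      · positivity
      · rw [div_le_one (by linarith)]; linarith
    have hne : ((n:ℝ)) ≠ 0 := Nat.cast_ne_zero.mpr hn.ne'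
    have hee : ee n (1 / (2 * (n:ℝ))) = Real.sqrt 2 := by
      have harg : (n:ℝ) * Real.pi * (1 / (2 * (n:ℝ))) = Real.pi / 2 := by
        field_simp
      simp only [ee]
      rw [harg, Real.sin_pi_div_two, mul_one]
    have h1 := hu _ hx₀
    have h2 := hv _ hx₀
    simp only [iter4_ee, iter2_ee] at h1 h2
    rw [energy_smul_ee α n hn] at h1
    rw [energy_smul_ee γ n hn] at h2
    rw [hee] at h1 h2
    have hs2 : Real.sqrt 2 ≠ 0 := by positivity
    constructor
    · exact mul_right_cancel₀ hs2 (by linear_combination h1)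
    · exact mul_right_cancel₀ hs2 (by linear_combination h2)
  · rintro ⟨e1, e2⟩
    refine ⟨contDiff_smul_ee α n, contDiff_smul_ee γ n, ?_, ?_, ?_, ?_, ?_, ?_, ?_, ?_, ?_, ?_⟩
    · intro x _
      simp only [iter4_ee, iter2_ee]
      rw [energy_smul_ee α n hn]
      linear_combination (ee n x) * e1
    · intro x _
      simp only [iter4_ee, iter2_ee]
      rw [energy_smul_ee γ n hn]
      linear_combination (ee n x) * e2
    · simp [ee_zero]
    · simp [ee_one]
    · rw [iter2_ee]; simp [ee_zero]
    · rw [iter2_ee]; simp [ee_one]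
    · simp [ee_zero]
    · simp [ee_one]
    · rw [iter2_ee]; simp [ee_zero]
    · rw [iter2_ee]; simp [ee_one]

end helpers

theorem stmt3 (β ϱ k : ℝ) (hϱ : 0 < ϱ) (hk : 0 < k) (n : ℕ) (hn : 0 < n)
    (h1 : 2 * k / lam n + lam n < -β) (h2 : -β ≤ 3 * k / lam n + lam n)
    (a b : ℝ) (ha : a = Real.sqrt ((-β - lam n) / (ϱ * lam n)))
    (hb : b = Real.sqrt ((-β - (2 * k / lam n + lam n)) / (ϱ * lam n))) :
    {p : ℝ × ℝ | p ≠ (0, 0) ∧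
        DBSol β ϱ k (fun x => p.1 * ee n x) (fun x => p.2 * ee n x)}
      = {(a, a), (-a, -a), (b, -b), (-b, b)} := by
  have hL := lam_pos n hn
  have hL0 : lam n ≠ 0 := ne_of_gt hL
  have hϱ0 : ϱ ≠ 0 := ne_of_gt hϱ
  have hkL : 0 < 2 * k / lam n := by positivity
  have hna : 0 < (-β - lam n) / (ϱ * lam n) := by
    apply div_pos (by linarith) (by positivity)
  have hnb : 0 < (-β - (2 * k / lam n + lam n)) / (ϱ * lam n) := by
    apply div_pos (by linarith) (by positivity)
  have hapos : 0 < a := ha ▸ Real.sqrt_pos.mpr hna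
  have hbpos : 0 < b := hb ▸ Real.sqrt_pos.mpr hnb
  have ha2 : ϱ * lam n ^ 2 * a ^ 2 = (-β - lam n) * lam n := by
    rw [ha, Real.sq_sqrt hna.le]
    field_simp
  have hb2 : ϱ * lam n ^ 2 * b ^ 2 = (-β - lam n) * lam n - 2 * k := by
    rw [hb, Real.sq_sqrt hnb.le]
    field_simp
    ring
  have h2' : -(β * lam n) ≤ 3 * k + lam n ^ 2 := by
    have h := mul_le_mul_of_nonneg_right h2 hL.le
    have he : (3 * k / lam n + lam n) * lam n = 3 * k + lam n ^ 2 := by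
      field_simp
    rw [he] at h
    linarith
  ext ⟨α, γ⟩
  simp only [Set.mem_setOf_eq, Set.mem_insert_iff, Set.mem_singleton_iff, ne_eq,
    Prod.mk.injEq, not_and]
  rw [sol_iff β ϱ k n hn α γ]
  constructor
  · rintro ⟨hne, e1, e2⟩
    by_cases hc : α = γ
    · subst hc
      have hα : α ≠ 0 := by
        intro h0
        exact (hne h0) h0
      have hfac : α * (lam n * (lam n + β) + ϱ * lam n ^ 2 * α ^ 2) = 0 := by
        linear_combination e1
      have h0 := (mul_eq_zero.mp hfac).resolve_left hα
      have hsq : (α - a) * (α + a) = 0 := by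
        have hz : ϱ * lam n ^ 2 * ((α - a) * (α + a)) = 0 := by
          linear_combination h0 - ha2
        have := (mul_eq_zero.mp hz).resolve_left (by positivity)
        exact this
      rcases mul_eq_zero.mp hsq with h | h
      · left; constructor <;> linarith
      · right; left; constructor <;> linarith
    · by_cases hc2 : α = -γ
      · have hγ : γ = -α := by linarith
        subst hγ
        have hα : α ≠ 0 := by
          intro h0
          exact hne h0 (by rw [h0]; exact neg_zero)
        have hfac : α * (lam n * (lam n + β) + 2 * k + ϱ * lam n ^ 2 * α ^ 2) = 0 := by
          linear_combination e1
        have h0 := (mul_eq_zero.mp hfac).resolve_left hα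
        have hsq : (α - b) * (α + b) = 0 := by
          have hz : ϱ * lam n ^ 2 * ((α - b) * (α + b)) = 0 := by
            linear_combination h0 - hb2
          exact (mul_eq_zero.mp hz).resolve_left (by positivity)
        rcases mul_eq_zero.mp hsq with h | h
        · right; right; left; constructor <;> linarith
        · right; right; right; constructor <;> linarith
      · exfalso
        have hsum : α + γ ≠ 0 := fun h => hc2 (by linarith)
        have hdiff : α - γ ≠ 0 := fun h => hc (by linarith)
        have hS : (α + γ) * (lam n * (lam n + β) + ϱ * lam n ^ 2 * (α ^ 2 - α * γ + γ ^ 2)) = 0 := by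
          linear_combination e1 + e2
        have hD : (α - γ) * (lam n * (lam n + β) + 2 * k + ϱ * lam n ^ 2 * (α ^ 2 + α * γ + γ ^ 2)) = 0 := by
          linear_combination e1 - e2
        have q1 := (mul_eq_zero.mp hS).resolve_left hsum
        have q2 := (mul_eq_zero.mp hD).resolve_left hdiff
        have hprod : ϱ * lam n ^ 2 * (α * γ) = -k := by
          linear_combination (q2 - q1) / 2
        have keyeq : ϱ * lam n ^ 2 * (α + γ) ^ 2 = -(lam n ^ 2) - β * lam n - 3 * k := by
          linear_combination q2 + hprod
        have hgt : 0 < ϱ * lam n ^ 2 * (α + γ) ^ 2 :=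
          mul_pos (by positivity) (pow_two_pos_of_ne_zero hsum)
        linarith
  · have ha0 : a ≠ 0 := ne_of_gt hapos
    have hb0 : b ≠ 0 := ne_of_gt hbpos
    rintro (⟨h1', h2'⟩ | ⟨h1', h2'⟩ | ⟨h1', h2'⟩ | ⟨h1', h2'⟩) <;> rw [h1', h2']
    · exact ⟨fun h _ => ha0 h, by linear_combination a * ha2, by linear_combination a * ha2⟩
    · exact ⟨fun h _ => ha0 (neg_eq_zero.mp h), by linear_combination (-a) * ha2,
        by linear_combination (-a) * ha2⟩
    · exact ⟨fun h _ => hb0 h, by linear_combination b * hb2, by linear_combination (-b) * hb2⟩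
    · exact ⟨fun h _ => hb0 (neg_eq_zero.mp h), by linear_combination (-b) * hb2,
        by linear_combination b * hb2⟩
end

section
/- Let n be a positive integer with −β ≤ λ_n. If α, γ are real numbers such that the pair (α·e_n, γ·e_n) is a solution of the double-beam system, then α = 0 and γ = 0. -/
open Real Set

lemma deriv_mul_sin (a c : ℝ) : deriv (fun x => a * Real.sin (c*x)) = fun x => a*c*Real.cos (c*x) := by
  funext x
  have h : HasDerivAt (fun x => a * Real.sin (c*x)) (a*c*Real.cos (c*x)) x := by
    have := ((Real.hasDerivAt_sin (c*x)).comp x ((hasDerivAt_id x).const_mul c)).const_mul a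
    simpa [mul_comm, mul_assoc, mul_left_comm] using this
  exact h.deriv

lemma deriv_mul_cos (a c : ℝ) : deriv (fun x => a * Real.cos (c*x)) = fun x => -(a*c)*Real.sin (c*x) := by
  funext x
  have h : HasDerivAt (fun x => a * Real.cos (c*x)) (-(a*c)*Real.sin (c*x)) x := by
    have := ((Real.hasDerivAt_cos (c*x)).comp x ((hasDerivAt_id x).const_mul c)).const_mul a
    · exact this.congr_deriv (by ring)
  exact h.deriv

lemma iter2_mul_sin (a c : ℝ) : iteratedDeriv 2 (fun x => a * Real.sin (c*x)) = fun x => -(a*c^2) * Real.sin (c*x) := by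
  rw [show (2:ℕ) = 0+1+1 from rfl, iteratedDeriv_succ, iteratedDeriv_succ, iteratedDeriv_zero]
  rw [deriv_mul_sin, deriv_mul_cos]
  funext x; ring

lemma iter4_mul_sin (a c : ℝ) : iteratedDeriv 4 (fun x => a * Real.sin (c*x)) = fun x => (a*c^4) * Real.sin (c*x) := by
  rw [show (4:ℕ) = 2+1+1 from rfl, iteratedDeriv_succ, iteratedDeriv_succ, iter2_mul_sin]
  rw [deriv_mul_sin, deriv_mul_cos]
  funext x; ring

lemma energy_mul_sin (a : ℝ) (n : ℕ) (hn : 0 < n) :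
    energy (fun x => a * Real.sin ((n:ℝ)*Real.pi*x)) = a^2 * ((n:ℝ)^2*Real.pi^2) / 2 := by
  have hc : ((n:ℝ)*Real.pi) ≠ 0 := by positivity
  unfold energy
  rw [deriv_mul_sin]
  have : (∫ s in (0:ℝ)..1, (a*((n:ℝ)*Real.pi)*Real.cos ((n:ℝ)*Real.pi*s))^2)
      = (a*((n:ℝ)*Real.pi))^2 * ∫ s in (0:ℝ)..1, Real.cos ((n:ℝ)*Real.pi*s)^2 := by
    rw [← intervalIntegral.integral_const_mul]
    congr 1; funext s; ring
  rw [this, intervalIntegral.integral_comp_mul_left (fun u => Real.cos u ^ 2) hc,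
    integral_cos_sq]
  simp [Real.sin_nat_mul_pi]
  field_simp

theorem stmt5 (β ϱ k : ℝ) (hϱ : 0 < ϱ) (hk : 0 < k) (n : ℕ) (hn : 0 < n)
    (h : -β ≤ lam n) (α γ : ℝ)
    (hsol : DBSol β ϱ k (fun x => α * ee n x) (fun x => γ * ee n x)) :
    α = 0 ∧ γ = 0 := by
  set c : ℝ := (n:ℝ) * Real.pi with hc_def
  have hn1 : (1:ℝ) ≤ (n:ℝ) := by exact_mod_cast hn
  have hc_pos : 0 < c := by rw [hc_def]; positivity
  clear_value c
  have hrw : ∀ b : ℝ, (fun x => b * ee n x) = fun x => (b * Real.sqrt 2) * Real.sin (c*x) := by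
    intro b; funext x; simp only [ee, hc_def]; ring
  obtain ⟨_, _, hA, hB, _⟩ := hsol
  set x₀ : ℝ := 1/(2*(n:ℝ)) with hx0
  clear_value x₀
  have hx₀mem : x₀ ∈ Set.Icc (0:ℝ) 1 := by
    constructor
    · rw [hx0]; positivity
    · rw [hx0, div_le_one (by positivity)]; linarith
  have hsinx₀ : Real.sin (c * x₀) = 1 := by
    have : c * x₀ = Real.pi / 2 := by
      rw [hx0, hc_def]; field_simp
    rw [this, Real.sin_pi_div_two]
  have hlamc : lam n = c^2 := by rw [lam, hc_def]; ring
  have hs2 : Real.sqrt 2 ^ 2 = 2 := Real.sq_sqrt (by norm_num)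
  have hs2pos : (0:ℝ) < Real.sqrt 2 := by positivity
  have hEα : energy (fun x => α * ee n x) = α^2 * c^2 := by
    rw [hrw, hc_def, energy_mul_sin _ n hn, mul_pow, hs2]; ring
  have hEγ : energy (fun x => γ * ee n x) = γ^2 * c^2 := by
    rw [hrw, hc_def, energy_mul_sin _ n hn, mul_pow, hs2]; ring
  have hA' := hA x₀ hx₀mem
  have hB' := hB x₀ hx₀mem
  rw [hEα] at hA'
  rw [hEγ] at hB'
  rw [hrw α, hrw γ] at hA' hB'
  simp only [iter2_mul_sin, iter4_mul_sin, hsinx₀] at hA' hB'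
  have hs2ne : Real.sqrt 2 ≠ 0 := ne_of_gt hs2pos
  have hA2 : α * c^4 + (β + ϱ * (α^2 * c^2)) * (α * c^2) + k * (α - γ) = 0 := by
    apply mul_left_cancel₀ hs2ne
    rw [mul_zero]
    linear_combination hA'
  have hB2 : γ * c^4 + (β + ϱ * (γ^2 * c^2)) * (γ * c^2) - k * (α - γ) = 0 := by
    apply mul_left_cancel₀ hs2ne
    rw [mul_zero]
    linear_combination hB'
  rw [hlamc] at h
  have hsum : ϱ * c^4 * α^4 + α^2 * c^2 * (c^2 + β) + ϱ * c^4 * γ^4 + γ^2 * c^2 * (c^2 + β) + k * (α - γ)^2 = 0 := by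
    linear_combination α * hA2 + γ * hB2
  have hβ : 0 ≤ c^2 + β := by linarith
  have t1 : 0 ≤ α^2 * c^2 * (c^2 + β) := mul_nonneg (by positivity) hβ
  have t2 : 0 ≤ γ^2 * c^2 * (c^2 + β) := mul_nonneg (by positivity) hβ
  have t3 : 0 ≤ k * (α - γ)^2 := by positivity
  have t4 : 0 ≤ ϱ * c^4 * γ^4 := by positivity
  have t5 : 0 ≤ ϱ * c^4 * α^4 := by positivity
  have hpos : 0 < ϱ * c^4 := by positivity
  have hα4 : α^4 ≤ 0 := by
    have h1 : ϱ * c^4 * α^4 ≤ ϱ * c^4 * 0 := by rw [mul_zero]; linarith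
    exact le_of_mul_le_mul_left h1 hpos
  have hγ4 : γ^4 ≤ 0 := by
    have h1 : ϱ * c^4 * γ^4 ≤ ϱ * c^4 * 0 := by rw [mul_zero]; linarith
    exact le_of_mul_le_mul_left h1 hpos
  have ha0 : α^4 = 0 := le_antisymm hα4 (by positivity)
  have hg0 : γ^4 = 0 := le_antisymm hγ4 (by positivity)
  exact ⟨pow_eq_zero_iff (by norm_num) |>.mp ha0, pow_eq_zero_iff (by norm_num) |>.mp hg0⟩
end

section
/- (i) If λ > 0 and (α, γ) satisfies the mode equations at λ with |α| = |γ| ≠ 0, then C_u = C_v. (ii) If λ_i and λ_j are positive reals with λ_i ≠ λ_j, the pair (α_i, γ_i) satisfies the mode equations at λ_i, the pair (α_j, γ_j) satisfies the mode equations at λ_j, and either α_i·α_j = γ_i·γ_j ≠ 0 or α_i·α_j = −γ_i·γ_j ≠ 0, then |α_i| = |γ_i| and C_u = C_v. -/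
/-- The pair `(α, γ)` satisfies the mode equations at `λ` with parameters `k, Cu, Cv`. -/
def ModeEq (k Cu Cv lam α γ : ℝ) : Prop :=
  lam ^ 2 * α + Cu * lam * α + k * (α - γ) = 0 ∧
  lam ^ 2 * γ + Cv * lam * γ - k * (α - γ) = 0

theorem stmt6 (k Cu Cv : ℝ) (hk : 0 < k) :
    (∀ lam α γ : ℝ, 0 < lam → ModeEq k Cu Cv lam α γ → |α| = |γ| → α ≠ 0 →
      Cu = Cv) ∧
    (∀ lamI lamJ αI γI αJ γJ : ℝ, 0 < lamI → 0 < lamJ → lamI ≠ lamJ →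
      ModeEq k Cu Cv lamI αI γI → ModeEq k Cu Cv lamJ αJ γJ →
      ((αI * αJ = γI * γJ ∧ γI * γJ ≠ 0) ∨ (αI * αJ = -(γI * γJ) ∧ γI * γJ ≠ 0)) →
      |αI| = |γI| ∧ Cu = Cv) := by
  have kne : k ≠ 0 := ne_of_gt hk
  constructor
  · rintro lam α γ hlam ⟨h1, h2⟩ habs hα
    have hlα : lam * α ≠ 0 := mul_ne_zero (ne_of_gt hlam) hα
    rcases abs_eq_abs.mp habs with h | h
    · have h0 : (Cu - Cv) * (lam * α) = 0 := by
        linear_combination h1 - h2 - (lam ^ 2 + Cv * lam + 2 * k) * h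
      rcases mul_eq_zero.mp h0 with h' | h'
      · linarith
      · exact absurd h' hlα
    · have h0 : (Cu - Cv) * (lam * α) = 0 := by
        linear_combination h1 + h2 - (lam ^ 2 + Cv * lam) * h
      rcases mul_eq_zero.mp h0 with h' | h'
      · linarith
      · exact absurd h' hlα
  · rintro lamI lamJ αI γI αJ γJ hI hJ hne ⟨e1, e2⟩ ⟨e3, e4⟩ hcase
    have r1 : k * γI = (lamI ^ 2 + Cu * lamI + k) * αI := by linear_combination -e1
    have r2 : k * αI = (lamI ^ 2 + Cv * lamI + k) * γI := by linear_combination -e2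
    have r3 : k * γJ = (lamJ ^ 2 + Cu * lamJ + k) * αJ := by linear_combination -e3
    have r4 : k * αJ = (lamJ ^ 2 + Cv * lamJ + k) * γJ := by linear_combination -e4
    have hγ : γI * γJ ≠ 0 := by rcases hcase with ⟨_, h⟩ | ⟨_, h⟩ <;> exact h
    have hα : αI * αJ ≠ 0 := by
      rcases hcase with ⟨hc, h⟩ | ⟨hc, h⟩
      · rw [hc]; exact h
      · rw [hc]; simpa using h
    obtain ⟨hγI, hγJ⟩ := mul_ne_zero_iff.mp hγ
    obtain ⟨hαI, hαJ⟩ := mul_ne_zero_iff.mp hα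
    have hFG_I : (lamI ^ 2 + Cu * lamI + k) * (lamI ^ 2 + Cv * lamI + k) = k ^ 2 := by
      have h : ((lamI ^ 2 + Cu * lamI + k) * (lamI ^ 2 + Cv * lamI + k) - k ^ 2) * (αI * γI) = 0 := by
        linear_combination (-((lamI ^ 2 + Cv * lamI + k) * γI)) * r1 - (k * γI) * r2
      have := (mul_eq_zero.mp h).resolve_right (mul_ne_zero hαI hγI)
      linarith
    have hFG_J : (lamJ ^ 2 + Cu * lamJ + k) * (lamJ ^ 2 + Cv * lamJ + k) = k ^ 2 := by
      have h : ((lamJ ^ 2 + Cu * lamJ + k) * (lamJ ^ 2 + Cv * lamJ + k) - k ^ 2) * (αJ * γJ) = 0 := by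
        linear_combination (-((lamJ ^ 2 + Cv * lamJ + k) * γJ)) * r3 - (k * γJ) * r4
      have := (mul_eq_zero.mp h).resolve_right (mul_ne_zero hαJ hγJ)
      linarith
    have hFI : lamI ^ 2 + Cu * lamI + k ≠ 0 := by
      intro h0; rw [h0, zero_mul] at hFG_I; nlinarith
    have hFJ : lamJ ^ 2 + Cu * lamJ + k ≠ 0 := by
      intro h0; rw [h0, zero_mul] at hFG_J; nlinarith
    have hCuCv : Cu = Cv := by
      rcases hcase with ⟨hc, _⟩ | ⟨hc, _⟩
      · -- plus case
        have hFF : (lamI ^ 2 + Cu * lamI + k) * (lamJ ^ 2 + Cu * lamJ + k) = k ^ 2 := by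
          have h : ((lamI ^ 2 + Cu * lamI + k) * (lamJ ^ 2 + Cu * lamJ + k) - k ^ 2) * (γI * γJ) = 0 := by
            linear_combination (-((lamI ^ 2 + Cu * lamI + k) * (lamJ ^ 2 + Cu * lamJ + k))) * hc
              - ((lamJ ^ 2 + Cu * lamJ + k) * αJ) * r1 - (k * γI) * r3
          have := (mul_eq_zero.mp h).resolve_right hγ
          linarith
        have hFJGI : lamJ ^ 2 + Cu * lamJ + k = lamI ^ 2 + Cv * lamI + k := by
          have h : (lamI ^ 2 + Cu * lamI + k) *
              ((lamJ ^ 2 + Cu * lamJ + k) - (lamI ^ 2 + Cv * lamI + k)) = 0 := by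
            linear_combination hFF - hFG_I
          have := (mul_eq_zero.mp h).resolve_left hFI
          linarith
        have hGJFI : lamJ ^ 2 + Cv * lamJ + k = lamI ^ 2 + Cu * lamI + k := by
          have h : (lamJ ^ 2 + Cu * lamJ + k) *
              ((lamJ ^ 2 + Cv * lamJ + k) - (lamI ^ 2 + Cu * lamI + k)) = 0 := by
            linear_combination hFG_J - hFF
          have := (mul_eq_zero.mp h).resolve_left hFJ
          linarith
        have h : (Cu - Cv) * (lamI + lamJ) = 0 := by linear_combination hFJGI - hGJFI
        rcases mul_eq_zero.mp h with h' | h'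
        · linarith
        · linarith
      · -- minus case
        have hFF : (lamI ^ 2 + Cu * lamI + k) * (lamJ ^ 2 + Cu * lamJ + k) = -k ^ 2 := by
          have h : ((lamI ^ 2 + Cu * lamI + k) * (lamJ ^ 2 + Cu * lamJ + k) + k ^ 2) * (γI * γJ) = 0 := by
            linear_combination ((lamI ^ 2 + Cu * lamI + k) * (lamJ ^ 2 + Cu * lamJ + k)) * hc
              + ((lamJ ^ 2 + Cu * lamJ + k) * αJ) * r1 + (k * γI) * r3
          have := (mul_eq_zero.mp h).resolve_right hγ
          linarith
        have hFJGI : lamJ ^ 2 + Cu * lamJ + k = -(lamI ^ 2 + Cv * lamI + k) := by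
          have h : (lamI ^ 2 + Cu * lamI + k) *
              ((lamJ ^ 2 + Cu * lamJ + k) + (lamI ^ 2 + Cv * lamI + k)) = 0 := by
            linear_combination hFF + hFG_I
          have := (mul_eq_zero.mp h).resolve_left hFI
          linarith
        have hGJFI : lamJ ^ 2 + Cv * lamJ + k = -(lamI ^ 2 + Cu * lamI + k) := by
          have h : (lamJ ^ 2 + Cu * lamJ + k) *
              ((lamJ ^ 2 + Cv * lamJ + k) + (lamI ^ 2 + Cu * lamI + k)) = 0 := by
            linear_combination hFG_J + hFF
          have := (mul_eq_zero.mp h).resolve_left hFJ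
          linarith
        have h : (Cu - Cv) * (lamJ - lamI) = 0 := by linear_combination hFJGI - hGJFI
        rcases mul_eq_zero.mp h with h' | h'
        · linarith
        · exact absurd (by linarith) hne
    refine ⟨?_, hCuCv⟩
    have h : ((lamI ^ 2 + Cu * lamI + k) - k) * ((lamI ^ 2 + Cu * lamI + k) + k) = 0 := by
      linear_combination hFG_I + ((lamI ^ 2 + Cu * lamI + k) * lamI) * hCuCv
    rcases mul_eq_zero.mp h with h' | h'
    · have hh : k * γI = k * αI := by linear_combination r1 + αI * h'
      rw [mul_left_cancel₀ kne hh]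
    · have hh : k * γI = k * (-αI) := by linear_combination r1 + αI * h'
      rw [mul_left_cancel₀ kne hh, abs_neg]
end

section
/- If λ_i and λ_j are positive reals with λ_i ≠ λ_j, the pair (α_i, γ_i) satisfies the mode equations at λ_i, the pair (α_j, γ_j) satisfies the mode equations at λ_j, and α_i·γ_j = α_j·γ_i ≠ 0, then C_u = C_v. -/
theorem stmt7 (k Cu Cv : ℝ) (hk : 0 < k)
    (lamI lamJ αI γI αJ γJ : ℝ) (hI : 0 < lamI) (hJ : 0 < lamJ) (hne : lamI ≠ lamJ)
    (hmI : ModeEq k Cu Cv lamI αI γI) (hmJ : ModeEq k Cu Cv lamJ αJ γJ)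
    (h : αI * γJ = αJ * γI) (h0 : αJ * γI ≠ 0) :
    Cu = Cv := by
  obtain ⟨hI1, hI2⟩ := hmI
  obtain ⟨hJ1, hJ2⟩ := hmJ
  have hαJ : αJ ≠ 0 := fun hz => h0 (by rw [hz]; ring)
  have hγI : γI ≠ 0 := fun hz => h0 (by rw [hz]; ring)
  have hαI : αI ≠ 0 := fun hz => h0 (by rw [← h, hz]; ring)
  have hγJ : γJ ≠ 0 := fun hz => h0 (by rw [← h, hz]; ring)
  have hd : lamJ - lamI ≠ 0 := sub_ne_zero.mpr (Ne.symm hne)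
  have hA : αI * αJ ≠ 0 := mul_ne_zero hαI hαJ
  have hG : γI * γJ ≠ 0 := mul_ne_zero hγI hγJ
  have e1 : (lamJ ^ 2 + Cu * lamJ) * (αI * αJ) = (lamI ^ 2 + Cu * lamI) * (αI * αJ) := by
    linear_combination αI * hJ1 - αJ * hI1 + k * h
  have e2 : (lamJ ^ 2 + Cv * lamJ) * (γI * γJ) = (lamI ^ 2 + Cv * lamI) * (γI * γJ) := by
    linear_combination γI * hJ2 - γJ * hI2 - k * h
  have c1 : lamJ ^ 2 + Cu * lamJ = lamI ^ 2 + Cu * lamI := mul_right_cancel₀ hA e1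
  have c2 : lamJ ^ 2 + Cv * lamJ = lamI ^ 2 + Cv * lamI := mul_right_cancel₀ hG e2
  have d1 : (Cu + lamI + lamJ) * (lamJ - lamI) = 0 := by linear_combination c1
  have d2 : (Cv + lamI + lamJ) * (lamJ - lamI) = 0 := by linear_combination c2
  have u1 : Cu = -(lamI + lamJ) := by
    have := (mul_eq_zero.mp d1).resolve_right hd; linarith
  have u2 : Cv = -(lamI + lamJ) := by
    have := (mul_eq_zero.mp d2).resolve_right hd; linarith
  rw [u1, u2]
end

section
/- Let n₁ < n₂ < n₃ be positive integers and write λ₁ = λ_{n₁}, λ₂ = λ_{n₂}, λ₃ = λ_{n₃}. Let x, y, z, p, q, r be nonzero reals and set u = x·e_{n₁} + y·e_{n₂} + z·e_{n₃} and v = p·e_{n₁} + q·e_{n₂} + r·e_{n₃}. Then (u, v) is a solution of the double-beam system satisfying ∫₀¹ u'(s)² ds = ∫₀¹ v'(s)² ds if and only if λ₁·(λ₃ − λ₁) = 2k and λ₂·(λ₃ − λ₂) = 2k, p = −x, q = −y, r = z, and ϱ·x²·λ₁ + ϱ·y²·λ₂ + ϱ·z²·λ₃ + λ₃ + β = 0.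 -/
open Real Set

lemma int_cos_mul (a : ℝ) (ha : a ≠ 0) : ∫ s in (0:ℝ)..1, Real.cos (a * s) = Real.sin a / a := by
  have := intervalIntegral.mul_integral_comp_mul_left (c := a) (f := Real.cos) (a := 0) (b := 1)
  rw [integral_cos] at this
  simp only [mul_one, mul_zero, Real.sin_zero, sub_zero] at this
  field_simp
  exact this

lemma int_cos_int (j : ℤ) (hj : j ≠ 0) : ∫ s in (0:ℝ)..1, Real.cos ((j * Real.pi) * s) = 0 := by
  rw [int_cos_mul _ (by
    have : (j:ℝ) ≠ 0 := Int.cast_ne_zero.mpr hj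
    positivity)]
  simp [Real.sin_int_mul_pi]

lemma int_cos_cos (m n : ℕ) (hm : 0 < m) (hn : 0 < n) :
    ∫ s in (0:ℝ)..1, Real.cos ((m * Real.pi) * s) * Real.cos ((n * Real.pi) * s)
      = if m = n then 1/2 else 0 := by
  have key : ∀ s : ℝ, Real.cos ((m * Real.pi) * s) * Real.cos ((n * Real.pi) * s)
      = (Real.cos ((((m:ℝ) - n) * Real.pi) * s) + Real.cos ((((m:ℝ) + n) * Real.pi) * s)) / 2 := by
    intro s
    rw [show ((((m:ℝ) - n) * Real.pi) * s) = (m * Real.pi) * s - (n * Real.pi) * s by ring,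
        show ((((m:ℝ) + n) * Real.pi) * s) = (m * Real.pi) * s + (n * Real.pi) * s by ring,
        Real.cos_sub, Real.cos_add]
    ring
  rw [intervalIntegral.integral_congr (g := fun s => (Real.cos ((((m:ℝ) - n) * Real.pi) * s) + Real.cos ((((m:ℝ) + n) * Real.pi) * s)) / 2) (fun s _ => key s)]
  rw [intervalIntegral.integral_div, intervalIntegral.integral_add
    (Continuous.intervalIntegrable (by fun_prop) _ _)
    (Continuous.intervalIntegrable (by fun_prop) _ _)]
  by_cases h : m = n
  · subst h
    simp only [sub_self, zero_mul]
    have h2 : ∫ s in (0:ℝ)..1, Real.cos ((((m:ℝ) + m) * Real.pi) * s) = 0 := by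
      have := int_cos_int (m + m) (by omega)
      push_cast at this ⊢
      convert this using 3
    simp [h2]
  · have h1 : ∫ s in (0:ℝ)..1, Real.cos ((((m:ℝ) - n) * Real.pi) * s) = 0 := by
      have := int_cos_int ((m:ℤ) - n) (by omega)
      push_cast at this ⊢
      convert this using 3
    have h2 : ∫ s in (0:ℝ)..1, Real.cos ((((m:ℝ) + n) * Real.pi) * s) = 0 := by
      have := int_cos_int ((m:ℤ) + n) (by omega)
      push_cast at this ⊢
      convert this using 3
    simp [h1, h2, h]

lemma int_sin_sin (m n : ℕ) (hm : 0 < m) (hn : 0 < n) :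
    ∫ s in (0:ℝ)..1, Real.sin ((m * Real.pi) * s) * Real.sin ((n * Real.pi) * s)
      = if m = n then 1/2 else 0 := by
  have key : ∀ s : ℝ, Real.sin ((m * Real.pi) * s) * Real.sin ((n * Real.pi) * s)
      = (Real.cos ((((m:ℝ) - n) * Real.pi) * s) - Real.cos ((((m:ℝ) + n) * Real.pi) * s)) / 2 := by
    intro s
    rw [show ((((m:ℝ) - n) * Real.pi) * s) = (m * Real.pi) * s - (n * Real.pi) * s by ring,
        show ((((m:ℝ) + n) * Real.pi) * s) = (m * Real.pi) * s + (n * Real.pi) * s by ring,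
        Real.cos_sub, Real.cos_add]
    ring
  rw [intervalIntegral.integral_congr (g := fun s => (Real.cos ((((m:ℝ) - n) * Real.pi) * s) - Real.cos ((((m:ℝ) + n) * Real.pi) * s)) / 2) (fun s _ => key s)]
  rw [intervalIntegral.integral_div, intervalIntegral.integral_sub
    (Continuous.intervalIntegrable (by fun_prop) _ _)
    (Continuous.intervalIntegrable (by fun_prop) _ _)]
  have h2 : ∫ s in (0:ℝ)..1, Real.cos ((((m:ℝ) + n) * Real.pi) * s) = 0 := by
    have := int_cos_int ((m:ℤ) + n) (by omega)
    push_cast at this ⊢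
    convert this using 3
  by_cases h : m = n
  · subst h
    simp only [sub_self, zero_mul]
    simp [h2]
  · have h1 : ∫ s in (0:ℝ)..1, Real.cos ((((m:ℝ) - n) * Real.pi) * s) = 0 := by
      have := int_cos_int ((m:ℤ) - n) (by omega)
      push_cast at this ⊢
      convert this using 3
    simp [h1, h2, h]


lemma int3 (K₁ K₂ K₃ : ℝ) (n₁ n₂ n₃ m : ℕ) (h1 : 0 < n₁) (h2 : 0 < n₂) (h3 : 0 < n₃) (hm : 0 < m) :
    ∫ s in (0:ℝ)..1, (K₁ * Real.sin ((n₁ * Real.pi) * s) + K₂ * Real.sin ((n₂ * Real.pi) * s)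
        + K₃ * Real.sin ((n₃ * Real.pi) * s)) * Real.sin ((m * Real.pi) * s)
    = K₁ * (if n₁ = m then 1/2 else 0) + K₂ * (if n₂ = m then 1/2 else 0)
        + K₃ * (if n₃ = m then 1/2 else 0) := by
  have e : (∫ s in (0:ℝ)..1, (K₁ * Real.sin ((n₁ * Real.pi) * s) + K₂ * Real.sin ((n₂ * Real.pi) * s)
        + K₃ * Real.sin ((n₃ * Real.pi) * s)) * Real.sin ((m * Real.pi) * s))
      = ∫ s in (0:ℝ)..1, (K₁ * (Real.sin ((n₁ * Real.pi) * s) * Real.sin ((m * Real.pi) * s))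
        + (K₂ * (Real.sin ((n₂ * Real.pi) * s) * Real.sin ((m * Real.pi) * s))
        + K₃ * (Real.sin ((n₃ * Real.pi) * s) * Real.sin ((m * Real.pi) * s)))) :=
    intervalIntegral.integral_congr (fun s _ => by ring)
  rw [e, intervalIntegral.integral_add (Continuous.intervalIntegrable (by fun_prop) _ _)
      (Continuous.intervalIntegrable (by fun_prop) _ _),
    intervalIntegral.integral_add (Continuous.intervalIntegrable (by fun_prop) _ _)
      (Continuous.intervalIntegrable (by fun_prop) _ _),
    intervalIntegral.integral_const_mul, intervalIntegral.integral_const_mul,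
    intervalIntegral.integral_const_mul, int_sin_sin _ _ h1 hm, int_sin_sin _ _ h2 hm,
    int_sin_sin _ _ h3 hm]
  ring

lemma ortho3 (n₁ n₂ n₃ : ℕ) (h1 : 0 < n₁) (h12 : n₁ < n₂) (h23 : n₂ < n₃) (K₁ K₂ K₃ : ℝ)
    (h : ∀ s ∈ Set.Icc (0:ℝ) 1, K₁ * Real.sin ((n₁ * Real.pi) * s)
        + K₂ * Real.sin ((n₂ * Real.pi) * s) + K₃ * Real.sin ((n₃ * Real.pi) * s) = 0) :
    K₁ = 0 ∧ K₂ = 0 ∧ K₃ = 0 := by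
  have h2 : 0 < n₂ := lt_trans h1 h12
  have h3 : 0 < n₃ := lt_trans h2 h23
  have hz : ∀ m : ℕ, (∫ s in (0:ℝ)..1, (K₁ * Real.sin ((n₁ * Real.pi) * s)
      + K₂ * Real.sin ((n₂ * Real.pi) * s) + K₃ * Real.sin ((n₃ * Real.pi) * s))
        * Real.sin ((m * Real.pi) * s)) = 0 := by
    intro m
    have : EqOn (fun s => (K₁ * Real.sin ((n₁ * Real.pi) * s)
      + K₂ * Real.sin ((n₂ * Real.pi) * s) + K₃ * Real.sin ((n₃ * Real.pi) * s))
        * Real.sin ((m * Real.pi) * s)) (fun _ => (0:ℝ)) (Set.uIcc (0:ℝ) 1) := by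
      intro s hs
      rw [Set.uIcc_of_le (by norm_num)] at hs
      simp only
      rw [h s hs, zero_mul]
    rw [intervalIntegral.integral_congr this]
    simp
  refine ⟨?_, ?_, ?_⟩
  · have := hz n₁
    rw [int3 _ _ _ _ _ _ _ h1 h2 h3 h1, if_pos rfl, if_neg (by omega), if_neg (by omega)] at this
    linarith
  · have := hz n₂
    rw [int3 _ _ _ _ _ _ _ h1 h2 h3 h2, if_neg (by omega), if_pos rfl, if_neg (by omega)] at this
    linarith
  · have := hz n₃
    rw [int3 _ _ _ _ _ _ _ h1 h2 h3 h3, if_neg (by omega), if_neg (by omega), if_pos rfl] at this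
    linarith

lemma int3sq (b₁ b₂ b₃ : ℝ) (n₁ n₂ n₃ : ℕ) (h1 : 0 < n₁) (h12 : n₁ < n₂) (h23 : n₂ < n₃) :
    ∫ s in (0:ℝ)..1, (b₁ * Real.cos ((n₁ * Real.pi) * s) + b₂ * Real.cos ((n₂ * Real.pi) * s)
        + b₃ * Real.cos ((n₃ * Real.pi) * s)) ^ 2 = (b₁^2 + b₂^2 + b₃^2) / 2 := by
  have h2 : 0 < n₂ := lt_trans h1 h12
  have h3 : 0 < n₃ := lt_trans h2 h23
  have e : (∫ s in (0:ℝ)..1, (b₁ * Real.cos ((n₁ * Real.pi) * s) + b₂ * Real.cos ((n₂ * Real.pi) * s)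
        + b₃ * Real.cos ((n₃ * Real.pi) * s)) ^ 2)
      = ∫ s in (0:ℝ)..1,
        (b₁^2 * (Real.cos ((n₁ * Real.pi) * s) * Real.cos ((n₁ * Real.pi) * s))
        + (b₂^2 * (Real.cos ((n₂ * Real.pi) * s) * Real.cos ((n₂ * Real.pi) * s))
        + (b₃^2 * (Real.cos ((n₃ * Real.pi) * s) * Real.cos ((n₃ * Real.pi) * s))
        + ((2*b₁*b₂) * (Real.cos ((n₁ * Real.pi) * s) * Real.cos ((n₂ * Real.pi) * s))
        + ((2*b₁*b₃) * (Real.cos ((n₁ * Real.pi) * s) * Real.cos ((n₃ * Real.pi) * s))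
        + (2*b₂*b₃) * (Real.cos ((n₂ * Real.pi) * s) * Real.cos ((n₃ * Real.pi) * s))))))) :=
    intervalIntegral.integral_congr (fun s _ => by ring)
  rw [e]
  rw [intervalIntegral.integral_add (Continuous.intervalIntegrable (by fun_prop) _ _)
      (Continuous.intervalIntegrable (by fun_prop) _ _),
    intervalIntegral.integral_add (Continuous.intervalIntegrable (by fun_prop) _ _)
      (Continuous.intervalIntegrable (by fun_prop) _ _),
    intervalIntegral.integral_add (Continuous.intervalIntegrable (by fun_prop) _ _)
      (Continuous.intervalIntegrable (by fun_prop) _ _),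
    intervalIntegral.integral_add (Continuous.intervalIntegrable (by fun_prop) _ _)
      (Continuous.intervalIntegrable (by fun_prop) _ _),
    intervalIntegral.integral_add (Continuous.intervalIntegrable (by fun_prop) _ _)
      (Continuous.intervalIntegrable (by fun_prop) _ _)]
  simp only [intervalIntegral.integral_const_mul]
  rw [int_cos_cos _ _ h1 h1, int_cos_cos _ _ h2 h2, int_cos_cos _ _ h3 h3,
    int_cos_cos _ _ h1 h2, int_cos_cos _ _ h1 h3, int_cos_cos _ _ h2 h3,
    if_pos rfl, if_pos rfl, if_pos rfl, if_neg (by omega), if_neg (by omega), if_neg (by omega)]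
  ring


noncomputable def TS (b₁ b₂ b₃ a₁ a₂ a₃ : ℝ) : ℝ → ℝ :=
  fun t => b₁ * Real.sin (a₁ * t) + b₂ * Real.sin (a₂ * t) + b₃ * Real.sin (a₃ * t)

noncomputable def TCo (b₁ b₂ b₃ a₁ a₂ a₃ : ℝ) : ℝ → ℝ :=
  fun t => b₁ * Real.cos (a₁ * t) + b₂ * Real.cos (a₂ * t) + b₃ * Real.cos (a₃ * t)

lemma hasDerivAt_csin (b a t : ℝ) :
    HasDerivAt (fun t => b * Real.sin (a * t)) (b * a * Real.cos (a * t)) t := by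
  have h1 : HasDerivAt (fun u : ℝ => a * u) a t := by
    simpa using (hasDerivAt_id t).const_mul a
  have := ((Real.hasDerivAt_sin (a * t)).comp t h1).const_mul b
  exact this.congr_deriv (by ring)

lemma hasDerivAt_ccos (b a t : ℝ) :
    HasDerivAt (fun t => b * Real.cos (a * t)) (-(b * a) * Real.sin (a * t)) t := by
  have h1 : HasDerivAt (fun u : ℝ => a * u) a t := by
    simpa using (hasDerivAt_id t).const_mul a
  have := ((Real.hasDerivAt_cos (a * t)).comp t h1).const_mul b
  exact this.congr_deriv (by ring)

lemma deriv_TS (b₁ b₂ b₃ a₁ a₂ a₃ : ℝ) :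
    deriv (TS b₁ b₂ b₃ a₁ a₂ a₃) = TCo (b₁*a₁) (b₂*a₂) (b₃*a₃) a₁ a₂ a₃ := by
  funext t
  exact (((hasDerivAt_csin b₁ a₁ t).add (hasDerivAt_csin b₂ a₂ t)).add
    (hasDerivAt_csin b₃ a₃ t)).deriv

lemma deriv_TCo (b₁ b₂ b₃ a₁ a₂ a₃ : ℝ) :
    deriv (TCo b₁ b₂ b₃ a₁ a₂ a₃) = TS (-(b₁*a₁)) (-(b₂*a₂)) (-(b₃*a₃)) a₁ a₂ a₃ := by
  funext t
  exact (((hasDerivAt_ccos b₁ a₁ t).add (hasDerivAt_ccos b₂ a₂ t)).add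
    (hasDerivAt_ccos b₃ a₃ t)).deriv

lemma it2_TS (b₁ b₂ b₃ a₁ a₂ a₃ : ℝ) :
    iteratedDeriv 2 (TS b₁ b₂ b₃ a₁ a₂ a₃)
      = TS (-(b₁*a₁^2)) (-(b₂*a₂^2)) (-(b₃*a₃^2)) a₁ a₂ a₃ := by
  rw [iteratedDeriv_succ, iteratedDeriv_one, deriv_TS, deriv_TCo,
    show -(b₁*a₁*a₁) = -(b₁*a₁^2) by ring, show -(b₂*a₂*a₂) = -(b₂*a₂^2) by ring,
    show -(b₃*a₃*a₃) = -(b₃*a₃^2) by ring]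

lemma it4_TS (b₁ b₂ b₃ a₁ a₂ a₃ : ℝ) :
    iteratedDeriv 4 (TS b₁ b₂ b₃ a₁ a₂ a₃)
      = TS (b₁*a₁^4) (b₂*a₂^4) (b₃*a₃^4) a₁ a₂ a₃ := by
  rw [iteratedDeriv_succ, iteratedDeriv_succ, iteratedDeriv_succ, iteratedDeriv_one,
    deriv_TS, deriv_TCo, deriv_TS, deriv_TCo,
    show -(-(b₁*a₁*a₁)*a₁*a₁) = b₁*a₁^4 by ring, show -(-(b₂*a₂*a₂)*a₂*a₂) = b₂*a₂^4 by ring,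
    show -(-(b₃*a₃*a₃)*a₃*a₃) = b₃*a₃^4 by ring]

lemma contDiff_TS (b₁ b₂ b₃ a₁ a₂ a₃ : ℝ) : ContDiff ℝ 4 (TS b₁ b₂ b₃ a₁ a₂ a₃) := by
  have hs : ∀ b a : ℝ, ContDiff ℝ 4 (fun t : ℝ => b * Real.sin (a * t)) := fun b a =>
    contDiff_const.mul ((Real.contDiff_sin.of_le le_top).comp (contDiff_const.mul contDiff_id))
  exact ((hs b₁ a₁).add (hs b₂ a₂)).add (hs b₃ a₃)


lemma algebra_fwd (k A l₁ l₂ l₃ x y z p q r : ℝ) (hk : 0 < k)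
    (hl1 : 0 < l₁) (h12 : l₁ < l₂) (h23 : l₂ < l₃)
    (hx : x ≠ 0) (hy : y ≠ 0) (hz : z ≠ 0)
    (eu1 : x*(l₁^2 + A*l₁) + k*(x-p) = 0) (ev1 : p*(l₁^2 + A*l₁) - k*(x-p) = 0)
    (eu2 : y*(l₂^2 + A*l₂) + k*(y-q) = 0) (ev2 : q*(l₂^2 + A*l₂) - k*(y-q) = 0)
    (eu3 : z*(l₃^2 + A*l₃) + k*(z-r) = 0) (ev3 : r*(l₃^2 + A*l₃) - k*(z-r) = 0) :
    l₁*(l₃-l₁) = 2*k ∧ l₂*(l₃-l₂) = 2*k ∧ p = -x ∧ q = -y ∧ r = z ∧ A = -l₃ := by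
  have hcase : ∀ c d l : ℝ, c ≠ 0 → (c*(l^2+A*l) + k*(c-d) = 0) → (d*(l^2+A*l) - k*(c-d) = 0) →
      (l^2 + A*l = 0 ∧ d = c) ∨ (l^2 + A*l + 2*k = 0 ∧ d = -c) := by
    intro c d l hc h1 h2
    by_cases hP : l^2 + A*l = 0
    · left
      refine ⟨hP, ?_⟩
      have hd : (c - d) * (2*k) = 0 := by linear_combination h1 - h2 - (c-d)*hP
      rcases mul_eq_zero.mp hd with h | h
      · linarith
      · linarith
    · right
      have hs : (c + d) * (l^2 + A*l) = 0 := by linear_combination h1 + h2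
      rcases mul_eq_zero.mp hs with h | h
      · have hd : d = -c := by linarith
        refine ⟨?_, hd⟩
        have hD : (c - d) * (l^2 + A*l + 2*k) = 0 := by linear_combination h1 - h2
        rcases mul_eq_zero.mp hD with h' | h'
        · exfalso; apply hc; linarith
        · exact h'
      · exact absurd h hP
  have root : ∀ l : ℝ, 0 < l → l^2 + A*l = 0 → A = -l := by
    intro l hl h
    rcases mul_eq_zero.mp (show l*(l+A) = 0 by linear_combination h) with h' | h'
    · linarith
    · linarith
  have sroot : ∀ li lj : ℝ, li < lj → li^2+A*li+2*k = 0 → lj^2+A*lj+2*k = 0 →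
      A = -(li+lj) := by
    intro li lj hij h1 h2
    rcases mul_eq_zero.mp (show (li-lj)*(li+lj+A) = 0 by linear_combination h1 - h2) with h' | h'
    · linarith
    · linarith
  rcases hcase x p l₁ hx eu1 ev1 with ⟨hP1, hd1⟩ | ⟨hQ1, hd1⟩ <;>
    rcases hcase y q l₂ hy eu2 ev2 with ⟨hP2, hd2⟩ | ⟨hQ2, hd2⟩ <;>
    rcases hcase z r l₃ hz eu3 ev3 with ⟨hP3, hd3⟩ | ⟨hQ3, hd3⟩
  · exfalso; have a1 := root l₁ hl1 hP1; have a2 := root l₂ (by linarith) hP2; linarith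
  · exfalso; have a1 := root l₁ hl1 hP1; have a2 := root l₂ (by linarith) hP2; linarith
  · exfalso; have a1 := root l₁ hl1 hP1; have a3 := root l₃ (by linarith) hP3; linarith
  · exfalso; have a1 := root l₁ hl1 hP1; have a23 := sroot l₂ l₃ h23 hQ2 hQ3; linarith
  · exfalso; have a2 := root l₂ (by linarith) hP2; have a3 := root l₃ (by linarith) hP3; linarith
  · exfalso
    have a2 := root l₂ (by linarith) hP2
    have a13 := sroot l₁ l₃ (by linarith) hQ1 hQ3
    linarith
  · have a3 := root l₃ (by linarith) hP3
    exact ⟨by linear_combination -hQ1 + l₁*a3, by linear_combination -hQ2 + l₂*a3,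
      hd1, hd2, hd3, a3⟩
  · exfalso
    have a12 := sroot l₁ l₂ h12 hQ1 hQ2
    have a23 := sroot l₂ l₃ h23 hQ2 hQ3
    linarith
theorem stmt9 (β ϱ k : ℝ) (hϱ : 0 < ϱ) (hk : 0 < k)
    (n₁ n₂ n₃ : ℕ) (hn₁ : 0 < n₁) (h12 : n₁ < n₂) (h23 : n₂ < n₃)
    (l₁ l₂ l₃ : ℝ) (hl₁ : l₁ = lam n₁) (hl₂ : l₂ = lam n₂) (hl₃ : l₃ = lam n₃)
    (x y z p q r : ℝ) (hx : x ≠ 0) (hy : y ≠ 0) (hz : z ≠ 0)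
    (hp : p ≠ 0) (hq : q ≠ 0) (hr : r ≠ 0)
    (u v : ℝ → ℝ)
    (hu : u = fun t => x * ee n₁ t + y * ee n₂ t + z * ee n₃ t)
    (hv : v = fun t => p * ee n₁ t + q * ee n₂ t + r * ee n₃ t) :
    (DBSol β ϱ k u v ∧ energy u = energy v) ↔
      (l₁ * (l₃ - l₁) = 2 * k ∧ l₂ * (l₃ - l₂) = 2 * k ∧
        p = -x ∧ q = -y ∧ r = z ∧
        ϱ * x ^ 2 * l₁ + ϱ * y ^ 2 * l₂ + ϱ * z ^ 2 * l₃ + l₃ + β = 0) := by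
  have hπ := Real.pi_pos
  have hs2 : Real.sqrt 2 ≠ 0 := by positivity
  have hsq2 : Real.sqrt 2 ^ 2 = 2 := Real.sq_sqrt (by norm_num)
  have hn2 : 0 < n₂ := lt_trans hn₁ h12
  have hn3 : 0 < n₃ := lt_trans hn2 h23
  have hc1 : (0:ℝ) < n₁ := by exact_mod_cast hn₁
  have hc12 : (n₁:ℝ) < n₂ := by exact_mod_cast h12
  have hc23 : (n₂:ℝ) < n₃ := by exact_mod_cast h23
  have hl1pos : 0 < l₁ := by rw [hl₁]; unfold lam; positivity
  have hl12 : l₁ < l₂ := by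
    rw [hl₁, hl₂]; unfold lam
    exact mul_lt_mul_of_pos_right (by nlinarith) (by positivity)
  have hl23 : l₂ < l₃ := by
    rw [hl₂, hl₃]; unfold lam
    exact mul_lt_mul_of_pos_right (by nlinarith) (by positivity)
  have ha1 : ((n₁:ℝ)*π)^2 = l₁ := by rw [hl₁]; unfold lam; ring
  have ha2 : ((n₂:ℝ)*π)^2 = l₂ := by rw [hl₂]; unfold lam; ring
  have ha3 : ((n₃:ℝ)*π)^2 = l₃ := by rw [hl₃]; unfold lam; ring
  have ha14 : ((n₁:ℝ)*π)^4 = l₁^2 := by rw [hl₁]; unfold lam; ring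
  have ha24 : ((n₂:ℝ)*π)^4 = l₂^2 := by rw [hl₂]; unfold lam; ring
  have ha34 : ((n₃:ℝ)*π)^4 = l₃^2 := by rw [hl₃]; unfold lam; ring
  have hu' : u = TS (x*Real.sqrt 2) (y*Real.sqrt 2) (z*Real.sqrt 2)
      ((n₁:ℝ)*π) ((n₂:ℝ)*π) ((n₃:ℝ)*π) := by
    rw [hu]; funext t; simp only [TS, ee]; ring
  have hv' : v = TS (p*Real.sqrt 2) (q*Real.sqrt 2) (r*Real.sqrt 2)
      ((n₁:ℝ)*π) ((n₂:ℝ)*π) ((n₃:ℝ)*π) := by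
    rw [hv]; funext t; simp only [TS, ee]; ring
  have h4u : iteratedDeriv 4 u = TS (x*Real.sqrt 2*((n₁:ℝ)*π)^4) (y*Real.sqrt 2*((n₂:ℝ)*π)^4)
      (z*Real.sqrt 2*((n₃:ℝ)*π)^4) ((n₁:ℝ)*π) ((n₂:ℝ)*π) ((n₃:ℝ)*π) := by
    rw [hu', it4_TS]
  have h2u : iteratedDeriv 2 u = TS (-(x*Real.sqrt 2*((n₁:ℝ)*π)^2)) (-(y*Real.sqrt 2*((n₂:ℝ)*π)^2))
      (-(z*Real.sqrt 2*((n₃:ℝ)*π)^2)) ((n₁:ℝ)*π) ((n₂:ℝ)*π) ((n₃:ℝ)*π) := by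
    rw [hu', it2_TS]
  have h4v : iteratedDeriv 4 v = TS (p*Real.sqrt 2*((n₁:ℝ)*π)^4) (q*Real.sqrt 2*((n₂:ℝ)*π)^4)
      (r*Real.sqrt 2*((n₃:ℝ)*π)^4) ((n₁:ℝ)*π) ((n₂:ℝ)*π) ((n₃:ℝ)*π) := by
    rw [hv', it4_TS]
  have h2v : iteratedDeriv 2 v = TS (-(p*Real.sqrt 2*((n₁:ℝ)*π)^2)) (-(q*Real.sqrt 2*((n₂:ℝ)*π)^2))
      (-(r*Real.sqrt 2*((n₃:ℝ)*π)^2)) ((n₁:ℝ)*π) ((n₂:ℝ)*π) ((n₃:ℝ)*π) := by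
    rw [hv', it2_TS]
  have hEu : energy u = x^2*l₁ + y^2*l₂ + z^2*l₃ := by
    show (∫ s in (0:ℝ)..1, (deriv u s)^2) = _
    rw [hu', deriv_TS]
    simp only [TCo]
    rw [int3sq _ _ _ n₁ n₂ n₃ hn₁ h12 h23, ← ha1, ← ha2, ← ha3]
    linear_combination ((x*((n₁:ℝ)*π))^2 + (y*((n₂:ℝ)*π))^2 + (z*((n₃:ℝ)*π))^2)/2 * hsq2
  have hEv : energy v = p^2*l₁ + q^2*l₂ + r^2*l₃ := by
    show (∫ s in (0:ℝ)..1, (deriv v s)^2) = _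
    rw [hv', deriv_TS]
    simp only [TCo]
    rw [int3sq _ _ _ n₁ n₂ n₃ hn₁ h12 h23, ← ha1, ← ha2, ← ha3]
    linear_combination ((p*((n₁:ℝ)*π))^2 + (q*((n₂:ℝ)*π))^2 + (r*((n₃:ℝ)*π))^2)/2 * hsq2
  constructor
  · rintro ⟨⟨hcu, hcv, hODEu, hODEv, -, -, -, -, -, -, -, -⟩, hE⟩
    obtain ⟨ku1, ku2, ku3⟩ := ortho3 n₁ n₂ n₃ hn₁ h12 h23
      (Real.sqrt 2 * (x*(l₁^2 + (β + ϱ*energy u)*l₁) + k*(x-p)))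
      (Real.sqrt 2 * (y*(l₂^2 + (β + ϱ*energy u)*l₂) + k*(y-q)))
      (Real.sqrt 2 * (z*(l₃^2 + (β + ϱ*energy u)*l₃) + k*(z-r)))
      (fun s hs => by
        have h0 := hODEu s hs
        rw [h4u, h2u, hu', hv'] at h0
        simp only [TS] at h0
        rw [← hu'] at h0
        rw [← ha1, ← ha2, ← ha3]
        linear_combination h0)
    obtain ⟨kv1, kv2, kv3⟩ := ortho3 n₁ n₂ n₃ hn₁ h12 h23
      (Real.sqrt 2 * (p*(l₁^2 + (β + ϱ*energy u)*l₁) - k*(x-p)))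
      (Real.sqrt 2 * (q*(l₂^2 + (β + ϱ*energy u)*l₂) - k*(y-q)))
      (Real.sqrt 2 * (r*(l₃^2 + (β + ϱ*energy u)*l₃) - k*(z-r)))
      (fun s hs => by
        have h0 := hODEv s hs
        rw [← hE, h4v, h2v, hu', hv'] at h0
        simp only [TS] at h0
        rw [← hu'] at h0
        rw [← ha1, ← ha2, ← ha3]
        linear_combination h0)
    have mk : ∀ E : ℝ, Real.sqrt 2 * E = 0 → E = 0 := by
      intro E hEz
      rcases mul_eq_zero.mp hEz with h | h
      · exact absurd h hs2
      · exact h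
    obtain ⟨g1, g2, g3, g4, g5, g6⟩ := algebra_fwd k (β+ϱ*energy u) l₁ l₂ l₃ x y z p q r
      hk hl1pos hl12 hl23 hx hy hz (mk _ ku1) (mk _ kv1) (mk _ ku2) (mk _ kv2)
      (mk _ ku3) (mk _ kv3)
    refine ⟨g1, g2, g3, g4, g5, ?_⟩
    rw [hEu] at g6
    linear_combination g6
  · rintro ⟨hC1, hC2, hpX, hqY, hrZ, hβ⟩
    subst hpX; subst hqY; subst hrZ
    have hE : energy u = energy v := by rw [hEu, hEv]; ring
    have hA : β + ϱ * energy u = -l₃ := by rw [hEu]; linear_combination hβ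
    have hAv : β + ϱ * energy v = -l₃ := by rw [← hE]; exact hA
    refine ⟨⟨?_, ?_, ?_, ?_, ?_, ?_, ?_, ?_, ?_, ?_, ?_, ?_⟩, hE⟩
    · rw [hu']; exact contDiff_TS _ _ _ _ _ _
    · rw [hv']; exact contDiff_TS _ _ _ _ _ _
    · intro s hs
      rw [hA, h4u, h2u, hu', hv']
      simp only [TS]
      rw [ha14, ha24, ha34, ha1, ha2, ha3]
      linear_combination (-(Real.sqrt 2)*x*Real.sin ((n₁:ℝ)*π*s))*hC1
        + (-(Real.sqrt 2)*y*Real.sin ((n₂:ℝ)*π*s))*hC2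
    · intro s hs
      rw [hAv, h4v, h2v, hu', hv']
      simp only [TS]
      rw [ha14, ha24, ha34, ha1, ha2, ha3]
      linear_combination (Real.sqrt 2*x*Real.sin ((n₁:ℝ)*π*s))*hC1
        + (Real.sqrt 2*y*Real.sin ((n₂:ℝ)*π*s))*hC2
    · rw [hu']; simp [TS]
    · rw [hu']; simp [TS, Real.sin_nat_mul_pi]
    · rw [h2u]; simp [TS]
    · rw [h2u]; simp [TS, Real.sin_nat_mul_pi]
    · rw [hv']; simp [TS]
    · rw [hv']; simp [TS, Real.sin_nat_mul_pi]
    · rw [h2v]; simp [TS]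
    · rw [h2v]; simp [TS, Real.sin_nat_mul_pi]
end
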